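/- arXiv:1006.4646 — 11 statements merged into one kernel-verified Lean document; each statement's English description precedes it below -/
import Mathlib

section
/- For any regular languages L1 and L2 over an alphabet Σ, if L1 is accepted by a complete DFA with m states and L2 is accepted by a complete DFA with n states (m, n ≥ 1), then the language L1^R · L2 (reversal of L1 catenated with L2) is accepted by a complete DFA with at most (3/4)·2^(m+n) states. -/
open Computability

def revLang {α : Type} (L : Language α) : Language α := {w | w.reverse ∈ L}

section Aux

variable {α σ₁ σ₂ : Type} (M : DFA α σ₁) (N : DFA α σ₂)

/-- State type for the DFA recognizing `L(M)^R · L(N)`. -/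
def RCState (M : DFA α σ₁) (N : DFA α σ₂) : Type :=
  {p : Set σ₁ × Set σ₂ // M.start ∈ p.1 → N.start ∈ p.2}

/-- DFA for `L(M)^R · L(N)`. -/
def rcDFA : DFA α (RCState M N) where
  step := fun p a =>
    ⟨({q | M.step q a ∈ p.1.1},
      {t | (∃ u ∈ p.1.2, N.step u a = t) ∨ (M.step M.start a ∈ p.1.1 ∧ t = N.start)}),
     fun h => Or.inr ⟨h, rfl⟩⟩
  start := ⟨(M.accept, {t | t = N.start ∧ M.start ∈ M.accept}), fun h => ⟨rfl, h⟩⟩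
  accept := {p | ∃ t ∈ p.1.2, t ∈ N.accept}

lemma rcDFA_eval (w : List α) :
    ((rcDFA M N).eval w).1 =
      ({q | M.evalFrom q w.reverse ∈ M.accept},
       {t | ∃ u v, w = u ++ v ∧ M.evalFrom M.start u.reverse ∈ M.accept ∧
            N.evalFrom N.start v = t}) := by
  induction w using List.reverseRecOn with
  | nil =>
    show ((rcDFA M N).start).1 = _
    ext1
    · ext q
      simp [rcDFA, DFA.evalFrom]
    · ext t
      constructor
      · rintro ⟨rfl, h⟩
        exact ⟨[], [], rfl, h, rfl⟩
      · rintro ⟨u, v, huv, hu, hv⟩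
        obtain ⟨rfl, rfl⟩ := List.append_eq_nil_iff.mp huv.symm
        exact ⟨hv.symm, hu⟩
  | append_singleton w a ih =>
    have heval : (rcDFA M N).eval (w ++ [a]) = (rcDFA M N).step ((rcDFA M N).eval w) a :=
      DFA.evalFrom_append_singleton _ _ _ _
    rw [heval]
    ext1
    · ext q
      show M.step q a ∈ ((rcDFA M N).eval w).1.1 ↔ M.evalFrom q (w ++ [a]).reverse ∈ M.accept
      rw [ih]
      simp [DFA.evalFrom]
    · ext t
      show ((∃ u ∈ ((rcDFA M N).eval w).1.2, N.step u a = t) ∨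
        (M.step M.start a ∈ ((rcDFA M N).eval w).1.1 ∧ t = N.start)) ↔ _
      rw [ih]
      simp only [Set.mem_setOf_eq]
      constructor
      · rintro (⟨u', ⟨u, v, rfl, hu, rfl⟩, rfl⟩ | ⟨h, rfl⟩)
        · refine ⟨u, v ++ [a], by rw [List.append_assoc], hu, ?_⟩
          rw [DFA.evalFrom_append_singleton]
        · refine ⟨w ++ [a], [], (List.append_nil _).symm, ?_, rfl⟩
          rw [List.reverse_append, List.reverse_singleton, List.singleton_append]
          exact h
      · rintro ⟨u, v, huv, hu, hv⟩
        rcases v.eq_nil_or_concat' with rfl | ⟨v', b, rfl⟩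
        · right
          rw [List.append_nil] at huv
          subst huv
          rw [List.reverse_append, List.reverse_singleton, List.singleton_append] at hu
          exact ⟨hu, hv.symm⟩
        · left
          obtain ⟨rfl, hb⟩ : w = u ++ v' ∧ [a] = [b] := by
            rw [← List.append_assoc] at huv
            exact List.append_inj' huv rfl
          obtain rfl : a = b := by injection hb
          refine ⟨N.evalFrom N.start v', ⟨u, v', rfl, hu, rfl⟩, ?_⟩
          rw [← DFA.evalFrom_append_singleton]
          exact hv

lemma rcDFA_accepts : (rcDFA M N).accepts = revLang M.accepts * N.accepts := by
  ext w
  rw [DFA.mem_accepts]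
  show (∃ t ∈ ((rcDFA M N).eval w).1.2, t ∈ N.accept) ↔ _
  rw [rcDFA_eval]
  rw [Language.mem_mul]
  simp only [Set.mem_setOf_eq]
  constructor
  · rintro ⟨t, ⟨u, v, rfl, hu, rfl⟩, ht⟩
    exact ⟨u, hu, v, ht, rfl⟩
  · rintro ⟨u, hu, v, hv, rfl⟩
    exact ⟨N.evalFrom N.start v, ⟨u, v, rfl, hu, rfl⟩, hv⟩

end Aux

/-- Reversal combined with catenation: general upper bound (3/4)·2^(m+n). -/
theorem revcat_upper_bound
    (α : Type) (m n : ℕ) (hm : 1 ≤ m) (hn : 1 ≤ n)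
    (σ₁ σ₂ : Type) [Fintype σ₁] [Fintype σ₂]
    (M : DFA α σ₁) (N : DFA α σ₂) (L₁ L₂ : Language α)
    (hM : M.accepts = L₁) (hN : N.accepts = L₂)
    (hcm : Fintype.card σ₁ = m) (hcn : Fintype.card σ₂ = n) :
    ∃ (σ : Type) (inst : Fintype σ) (C : DFA α σ),
      C.accepts = revLang L₁ * L₂ ∧ @Fintype.card σ inst ≤ 3 * 2 ^ (m + n - 2) := by
  classical
  haveI : Fintype (RCState M N) := by
    unfold RCState
    infer_instance
  refine ⟨RCState M N, inferInstance, rcDFA M N, ?_, ?_⟩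
  · rw [rcDFA_accepts, hM, hN]
  · -- counting
    set s₁ := M.start
    set t₀ := N.start
    let ψ : RCState M N → Fin 3 × Set {q : σ₁ // q ≠ s₁} × Set {t : σ₂ // t ≠ t₀} :=
      fun p => (if s₁ ∈ p.1.1 then 2 else if t₀ ∈ p.1.2 then 1 else 0,
        {q | q.1 ∈ p.1.1}, {t | t.1 ∈ p.1.2})
    have hinj : Function.Injective ψ := by
      rintro ⟨⟨S, T⟩, hST⟩ ⟨⟨S', T'⟩, hST'⟩ h
      simp only [ψ, Prod.mk.injEq] at h
      obtain ⟨h0, h1, h2⟩ := h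
      have hbit : ∀ (S : Set σ₁) (T : Set σ₂), (s₁ ∈ S → t₀ ∈ T) →
          ∀ i : Fin 3, (if s₁ ∈ S then (2:Fin 3) else if t₀ ∈ T then 1 else 0) = i →
          ((s₁ ∈ S ↔ i = 2) ∧ (t₀ ∈ T ↔ i ≠ 0)) := by
        intro S T hi i hif
        by_cases h1 : s₁ ∈ S
        · rw [if_pos h1] at hif
          subst hif
          exact ⟨⟨fun _ => rfl, fun _ => h1⟩, ⟨fun _ => by decide, fun _ => hi h1⟩⟩
        · rw [if_neg h1] at hif
          by_cases h2 : t₀ ∈ T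
          · rw [if_pos h2] at hif; subst hif
            exact ⟨⟨fun h => absurd h h1, fun h => absurd h (by decide)⟩,
              ⟨fun _ => by decide, fun _ => h2⟩⟩
          · rw [if_neg h2] at hif; subst hif
            exact ⟨⟨fun h => absurd h h1, fun h => absurd h (by decide)⟩,
              ⟨fun h => absurd h h2, fun h => absurd rfl h⟩⟩
      obtain ⟨hS1, hT1⟩ := hbit S T hST _ rfl
      obtain ⟨hS2, hT2⟩ := hbit S' T' hST' _ h0.symm
      have hmemS : s₁ ∈ S ↔ s₁ ∈ S' := hS1.trans hS2.symm
      have hmemT : t₀ ∈ T ↔ t₀ ∈ T' := hT1.trans hT2.symm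
      refine Subtype.ext (Prod.ext ?_ ?_)
      · ext q
        by_cases hq : q = s₁
        · subst hq; exact hmemS
        · exact ⟨fun h => Set.ext_iff.mp h1 ⟨q, hq⟩ |>.mp h,
            fun h => Set.ext_iff.mp h1 ⟨q, hq⟩ |>.mpr h⟩
      · ext t
        by_cases ht : t = t₀
        · subst ht; exact hmemT
        · exact ⟨fun h => Set.ext_iff.mp h2 ⟨t, ht⟩ |>.mp h,
            fun h => Set.ext_iff.mp h2 ⟨t, ht⟩ |>.mpr h⟩
    have hcard := Fintype.card_le_of_injective ψ hinj
    have c1 : Fintype.card {q : σ₁ // q ≠ s₁} = m - 1 := by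
      rw [← hcm]
      simp [Fintype.card_subtype_compl]
    have c2 : Fintype.card {t : σ₂ // t ≠ t₀} = n - 1 := by
      rw [← hcn]
      simp [Fintype.card_subtype_compl]
    rw [Fintype.card_prod, Fintype.card_prod, Fintype.card_fin,
      Fintype.card_set, Fintype.card_set, c1, c2] at hcard
    have he : m - 1 + (n - 1) = m + n - 2 := by omega
    calc Fintype.card (RCState M N) ≤ 3 * (2 ^ (m-1) * 2 ^ (n-1)) := hcard
      _ = 3 * 2 ^ (m + n - 2) := by rw [← pow_add, he]
end

section
/- For all integers m, n ≥ 2, there exist a complete DFA M with m states and a complete DFA N with n states over a common alphabet such that every complete DFA accepting L(M)^R · L(N) has at least (3/4)·2^(m+n) states. -/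
/-!
After reading `w`, the subset automaton `DFA.revCat M N` for `L(M)ᴿ · L(N)` is in the state
`(S, T)` where `S` is the set of states of `M` from which `wᴿ` is accepted and `T` is the set of
states `N` reaches on the suffixes `v` of the factorizations `w = u v` with `uᴿ ∈ L(M)`.
For the witnesses every pair with `0 ∈ S → 0 ∈ T` is reachable (`S` is built by a shift register
driven by `a`, `b`, `c`, then `T` by `d` and full rotations `aᵐ`), and any two states are
separated by some suffix. By Myhill–Nerode, a DFA accepting the language therefore has at least
as many states as there are such pairs, namely `3/4 · 2 ^ (m + n)`.
-/

open Computability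

section Counting

variable {α β : Type*}

theorem Nat.card_set [Finite α] : Nat.card (Set α) = 2 ^ Nat.card α := by
  cases nonempty_fintype α
  simp only [Nat.card_eq_fintype_card, Fintype.card_set]

theorem Set.ncard_setOf_notMem (a : α) :
    {S : Set α | a ∉ S}.ncard = {S : Set α | a ∈ S}.ncard := by
  rw [show {S : Set α | a ∉ S} = compl '' {S | a ∈ S} by rw [Set.compl_image_ofPred]; rfl,
    compl_injective.injOn.ncard_image]

theorem Set.ncard_setOf_mem_mul_two [Finite α] (a : α) :
    {S : Set α | a ∈ S}.ncard * 2 = 2 ^ Nat.card α := by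
  have h := Set.ncard_add_ncard_compl {S : Set α | a ∈ S}
  rw [Nat.card_set, Set.compl_ofPred, Set.ncard_setOf_notMem] at h
  omega

theorem Set.four_mul_ncard_setOf_mem_imp_mem [Finite α] [Finite β] (a : α) (b : β) :
    4 * {p : Set α × Set β | a ∈ p.1 → b ∈ p.2}.ncard = 3 * 2 ^ Nat.card α * 2 ^ Nat.card β := by
  have h := Set.ncard_add_ncard_compl {p : Set α × Set β | a ∈ p.1 → b ∈ p.2}
  have hbad : {p : Set α × Set β | a ∈ p.1 → b ∈ p.2}ᶜ = {S | a ∈ S} ×ˢ {T | b ∉ T} := by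
    ext; simp
  rw [hbad, Set.ncard_prod, Set.ncard_setOf_notMem, Nat.card_prod, Nat.card_set,
    Nat.card_set, ← Set.ncard_setOf_mem_mul_two a, ← Set.ncard_setOf_mem_mul_two b] at h
  rw [← Set.ncard_setOf_mem_mul_two a, ← Set.ncard_setOf_mem_mul_two b]
  nlinarith

end Counting

namespace DFA

section MyhillNerode

variable {α σ σ' : Type*}

theorem evalFrom_mem_range_eval {M : DFA α σ} {p : σ} (hp : p ∈ Set.range M.eval)
    (w : List α) : M.evalFrom p w ∈ Set.range M.eval := by
  obtain ⟨v, rfl⟩ := hp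
  exact ⟨v ++ w, evalFrom_of_append ..⟩

theorem ncard_le_card_of_accepts_eq [Finite σ'] {D : DFA α σ} {C : DFA α σ'}
    (h : C.accepts = D.accepts) {s : Set σ} (hs : s ⊆ Set.range D.eval)
    (hinj : s.InjOn D.acceptsFrom) : s.ncard ≤ Nat.card σ' := by
  have hsub : D.acceptsFrom '' s ⊆ Set.range C.acceptsFrom := by
    rintro _ ⟨_, hp, rfl⟩
    obtain ⟨w, rfl⟩ := hs hp
    exact ⟨C.eval w, by rw [← Language.leftQuotient_accepts_apply, h,
      Language.leftQuotient_accepts_apply]⟩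
  calc s.ncard = (D.acceptsFrom '' s).ncard := hinj.ncard_image.symm
    _ ≤ (Set.range C.acceptsFrom).ncard := Set.ncard_le_ncard hsub (Set.finite_range _)
    _ ≤ Nat.card σ' := by
      rw [← Nat.card_coe_set_eq]
      exact Finite.card_range_le _

end MyhillNerode

section RevCat

variable {α : Type} {σ₁ σ₂ : Type*} (M : DFA α σ₁) (N : DFA α σ₂)

def revCat : DFA α (Set σ₁ × Set σ₂) where
  step p x :=
    ((M.step · x) ⁻¹' p.1, (N.step · x) '' p.2 ∪ {t | M.step M.start x ∈ p.1 ∧ t = N.start})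
  start := (M.accept, {t | M.start ∈ M.accept ∧ t = N.start})
  accept := {p | (p.2 ∩ N.accept).Nonempty}

@[simp] theorem revCat_step (p : Set σ₁ × Set σ₂) (x : α) :
    (M.revCat N).step p x = ((M.step · x) ⁻¹' p.1,
      (N.step · x) '' p.2 ∪ {t | M.step M.start x ∈ p.1 ∧ t = N.start}) := rfl

@[simp] theorem revCat_start :
    (M.revCat N).start = (M.accept, {t | M.start ∈ M.accept ∧ t = N.start}) := rfl

theorem mem_revCat_accept {p : Set σ₁ × Set σ₂} :
    p ∈ (M.revCat N).accept ↔ (p.2 ∩ N.accept).Nonempty := Iff.rfl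

theorem eval_revCat (w : List α) :
    (M.revCat N).eval w = ({q | M.evalFrom q w.reverse ∈ M.accept},
      {t | ∃ u v, u ++ v = w ∧ u.reverse ∈ M.accepts ∧ N.eval v = t}) := by
  induction w using List.reverseRecOn with
  | nil =>
    ext <;> simp [revCat, DFA.mem_accepts, eq_comm]
  | append_singleton w x ih =>
    rw [eval_append_singleton, ih]
    ext t
    · simp [revCat]
    · simp only [revCat, Set.mem_union, Set.mem_image, Set.mem_ofPred_eq]
      constructor
      · rintro (⟨_, ⟨u, v, rfl, hu, rfl⟩, rfl⟩ | ⟨hx, rfl⟩)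
        · exact ⟨u, v ++ [x], by simp, hu, eval_append_singleton ..⟩
        · exact ⟨w ++ [x], [], by simp, by simpa [mem_accepts, eval] using hx, rfl⟩
      · rintro ⟨u, v, huv, hu, rfl⟩
        rcases v.eq_nil_or_concat' with rfl | ⟨v, y, rfl⟩
        · rw [List.append_nil] at huv
          subst huv
          exact Or.inr ⟨by simpa [mem_accepts, eval] using hu, rfl⟩
        · obtain ⟨rfl, rfl⟩ : u ++ v = w ∧ y = x := by simpa [← List.append_assoc] using huv
          exact Or.inl ⟨_, ⟨u, v, rfl, hu, rfl⟩, (eval_append_singleton ..).symm⟩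

theorem accepts_revCat : (M.revCat N).accepts = revLang M.accepts * N.accepts := by
  ext w
  rw [mem_accepts, eval_revCat, Language.mem_mul]
  constructor
  · rintro ⟨_, ⟨u, v, rfl, hu, rfl⟩, hv⟩
    exact ⟨u, hu, v, hv, rfl⟩
  · rintro ⟨u, hu, v, hv, rfl⟩
    exact ⟨_, ⟨u, v, rfl, hu, rfl⟩, hv⟩

end RevCat

end DFA

namespace Fin

variable {n : ℕ}

theorem neg_one_eq_last : (-1 : Fin (n + 1)) = Fin.last n :=
  (eq_neg_of_add_eq_zero_left (Fin.last_add_one _)).symm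

theorem add_one_eq_zero_iff {q : Fin (n + 1)} : q + 1 = 0 ↔ q = Fin.last n := by
  rw [← Fin.last_add_one, add_left_inj]

theorem add_one_eq_last_iff {q : Fin (n + 2)} : q + 1 = Fin.last _ ↔ q = (Fin.last n).castSucc := by
  rw [← Fin.succ_last, ← Fin.coeSucc_eq_succ, add_left_inj]

end Fin

open Fin.NatCast

namespace RevCatWitness

variable (k l : ℕ)

/- The letters `0, 1, 2, 3 : Fin 4` are `a, b, c, d`. With `m = k + 2`, the states `m - 2` and
`m - 1` are `(Fin.last k).castSucc` and `Fin.last (k + 1)`. -/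
def M : DFA (Fin 4) (Fin (k + 2)) where
  step q x := ![q + 1, if q = Fin.last _ then (Fin.last k).castSucc else q,
    Equiv.swap (Fin.last k).castSucc (Fin.last (k + 1)) q, q] x
  start := 0
  accept := {Fin.last _}

def N : DFA (Fin 4) (Fin (l + 2)) where
  step t x := ![t, t, 0, t + 1] x
  start := 0
  accept := {Fin.last _}

abbrev D : DFA (Fin 4) (Set (Fin (k + 2)) × Set (Fin (l + 2))) := (M k).revCat (N l)

variable {k l}

@[simp] theorem M_step_zero (q : Fin (k + 2)) : (M k).step q 0 = q + 1 := rfl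
@[simp] theorem M_step_one (q : Fin (k + 2)) :
    (M k).step q 1 = if q = Fin.last _ then (Fin.last k).castSucc else q := rfl
@[simp] theorem M_step_two (q : Fin (k + 2)) :
    (M k).step q 2 = Equiv.swap (Fin.last k).castSucc (Fin.last (k + 1)) q := rfl
@[simp] theorem M_step_three (q : Fin (k + 2)) : (M k).step q 3 = q := rfl
@[simp] theorem N_step_zero (t : Fin (l + 2)) : (N l).step t 0 = t := rfl
@[simp] theorem N_step_one (t : Fin (l + 2)) : (N l).step t 1 = t := rfl
@[simp] theorem N_step_three (t : Fin (l + 2)) : (N l).step t 3 = t + 1 := rfl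
@[simp] theorem M_start : (M k).start = 0 := rfl
@[simp] theorem N_start : (N l).start = 0 := rfl
@[simp] theorem M_accept : (M k).accept = {Fin.last _} := rfl
@[simp] theorem N_accept : (N l).accept = {Fin.last _} := rfl

theorem M_step_one_ne_last (q : Fin (k + 2)) : (M k).step q 1 ≠ Fin.last _ := by
  rw [M_step_one]
  split_ifs with h
  · exact (Fin.castSucc_lt_last _).ne
  · exact h

theorem D_start : (D k l).start = ({Fin.last _}, ∅) := by
  simp [Fin.last_pos.ne]

theorem mem_D_accept {p : Set (Fin (k + 2)) × Set (Fin (l + 2))} :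
    p ∈ (D k l).accept ↔ Fin.last _ ∈ p.2 := by
  simp [DFA.mem_revCat_accept]

variable (S : Set (Fin (k + 2))) (T : Set (Fin (l + 2)))

theorem D_step_zero : (D k l).step (S, T) 0 = ((· + 1) ⁻¹' S, T ∪ {t | 1 ∈ S ∧ t = 0}) := by
  simp

theorem D_step_one : (D k l).step (S, T) 1 =
    ((fun q => (M k).step q 1) ⁻¹' S, T ∪ {t | (M k).step 0 1 ∈ S ∧ t = 0}) := by
  simp only [DFA.revCat_step, N_step_one, Set.image_id', M_start, N_start]

theorem D_step_three : (D k l).step (S, T) 3 = (S, (· + 1) '' T ∪ {t | 0 ∈ S ∧ t = 0}) := by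
  simp

theorem D_evalFrom_replicate_zero (j : ℕ) : (D k l).evalFrom (S, T) (List.replicate j 0) =
    ((· + (j : Fin (k + 2))) ⁻¹' S,
      T ∪ {t | (∃ i ∈ Finset.range j, 1 + (i : Fin (k + 2)) ∈ S) ∧ t = 0}) := by
  induction j with
  | zero => simp
  | succ j ih =>
    rw [List.replicate_succ', DFA.evalFrom_append_singleton, ih, D_step_zero]
    ext q
    · simp [add_comm, add_left_comm]
    · simp only [Set.mem_union, Set.mem_ofPred_eq, Set.mem_preimage, Finset.range_add_one,
        Finset.exists_mem_insert]
      grind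

theorem D_evalFrom_replicate_zero_self (hne : S.Nonempty) :
    (D k l).evalFrom (S, T) (List.replicate (k + 2) 0) = (S, insert 0 T) := by
  obtain ⟨s, hs⟩ := hne
  have hrot : ∃ i < k + 2, 1 + (i : Fin (k + 2)) ∈ S :=
    ⟨(s - 1).val, (s - 1).isLt, by simpa using hs⟩
  rw [D_evalFrom_replicate_zero, Fin.natCast_self]
  ext t <;> simp [hrot, or_comm]

theorem D_evalFrom_replicate_three (j : ℕ) : (D k l).evalFrom (S, T) (List.replicate j 3) =
    (S, (· + (j : Fin (l + 2))) '' T ∪ {t | 0 ∈ S ∧ ∃ i ∈ Finset.range j, t = i}) := by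
  induction j generalizing T with
  | zero => simp
  | succ j ih =>
    rw [List.replicate_succ, DFA.evalFrom_cons, D_step_three, ih]
    ext t
    · rfl
    · simp [Finset.range_add_one, Set.image_union, add_assoc, add_comm, add_neg_eq_zero]
      tauto

theorem exists_D_evalFrom_two_two : ∃ T' ⊆ {0}, (D k l).evalFrom (S, T) [2, 2] = (S, T') := by
  refine ⟨_, ?_, Prod.ext ?_ rfl⟩
  · rintro t (⟨_, _, rfl⟩ | ⟨_, rfl⟩) <;> exact rfl
  · ext q
    simp

theorem replicate_three_mem_acceptsFrom_iff (t : Fin (l + 2)) :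
    List.replicate (Fin.last _ - t).val 3 ∈ (D k l).acceptsFrom (S, T) ↔ t ∈ T := by
  have hlast : ∀ i : ℕ, i < (Fin.last _ - t).val → Fin.last _ ≠ (i : Fin (l + 2)) := by
    intro i hi h
    have hlt := (Fin.last (l + 1) - t).isLt
    rw [Fin.ext_iff, Fin.val_cast_of_lt (by omega), Fin.val_last] at h
    omega
  rw [DFA.mem_acceptsFrom, D_evalFrom_replicate_three, mem_D_accept, Fin.cast_val_eq_self]
  simp +contextual [hlast]

/- The two `c`s leave `S` unchanged and reset `T` into `{0}`, so that afterwards `dⁿ` only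
detects whether `0` lies in the first component. -/
theorem replicate_zero_append_mem_acceptsFrom_iff (s : Fin (k + 2)) :
    List.replicate s.val 0 ++ [2, 2] ++ List.replicate (l + 2) 3 ∈ (D k l).acceptsFrom (S, T) ↔
      s ∈ S := by
  obtain ⟨T', hT', h⟩ := exists_D_evalFrom_two_two ((· + s) ⁻¹' S)
    (T ∪ {t | (∃ i ∈ Finset.range s.val, 1 + (i : Fin (k + 2)) ∈ S) ∧ t = 0})
  rw [DFA.mem_acceptsFrom, DFA.evalFrom_of_append, DFA.evalFrom_of_append,
    D_evalFrom_replicate_zero, Fin.cast_val_eq_self, h, D_evalFrom_replicate_three, mem_D_accept]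
  have hlast : Fin.last _ ∉ T' := fun h => Fin.last_pos.ne' (hT' h)
  have hsplit : ∃ i < l + 2, Fin.last _ = (i : Fin (l + 2)) :=
    ⟨l + 1, by omega, (Fin.natCast_eq_last _).symm⟩
  simp [hlast, hsplit]

theorem D_acceptsFrom_injective : Function.Injective (D k l).acceptsFrom := by
  rintro ⟨S, T⟩ ⟨S', T'⟩ h
  have hS : S = S' := Set.ext fun s => by
    rw [← replicate_zero_append_mem_acceptsFrom_iff S T s, h,
      replicate_zero_append_mem_acceptsFrom_iff]
  have hT : T = T' := Set.ext fun t => by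
    rw [← replicate_three_mem_acceptsFrom_iff S T t, h, replicate_three_mem_acceptsFrom_iff]
  rw [hS, hT]

/- Reading `a` and then `b` or `c` shifts a set containing `m - 1` down by one, keeps `m - 1`, and
writes `m - 2` in or out: a shift register fed from the top. As `0 ∉ S` and `m ≥ 3`, no element
passes through `0`, so `T` stays empty. -/
theorem exists_D_evalFrom_push (hk : 1 ≤ k) (hlast : Fin.last _ ∈ S) (h0 : 0 ∉ S) :
    ∃ x, (D k l).evalFrom ({q | q = Fin.last _ ∨ (q ≠ 0 ∧ q - 1 ∈ S)}, ∅) [0, x] = (S, ∅) := by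
  have hpl : (Fin.last k).castSucc ≠ Fin.last (k + 1) := (Fin.castSucc_lt_last _).ne
  have h0p : (0 : Fin (k + 2)) ≠ (Fin.last k).castSucc := by simp [Fin.ext_iff]; omega
  have h1 : (1 : Fin (k + 2)) ≠ Fin.last _ := by simp [Fin.ext_iff]; omega
  have h0l : (0 : Fin (k + 2)) ≠ Fin.last _ := Fin.last_pos.ne
  by_cases hp : (Fin.last k).castSucc ∈ S
  on_goal 1 => refine ⟨1, ?_⟩
  on_goal 2 => refine ⟨2, ?_⟩
  all_goals
    simp only [DFA.evalFrom, List.foldl, DFA.revCat_step]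
    refine Prod.ext ?_ (by ext; simp [h0, h1, h0p, h0l, Equiv.swap_apply_of_ne_of_ne h0p h0l,
      Fin.add_one_eq_last_iff, Fin.add_one_eq_zero_iff])
    ext a
    rcases eq_or_ne a (Fin.last _) with rfl | ha
    · simp [hlast]
    rcases eq_or_ne a (Fin.last k).castSucc with rfl | ha'
    · simp [hp, hpl.symm, Fin.add_one_eq_last_iff, Fin.add_one_eq_zero_iff]
    · simp [ha, ha', Equiv.swap_apply_of_ne_of_ne, Fin.add_one_eq_last_iff,
        Fin.add_one_eq_zero_iff]

theorem mk_empty_mem_range_D_eval_of_last_mem (hlast : Fin.last _ ∈ S) (h0 : 0 ∉ S) :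
    ((S, ∅) : Set _ × Set (Fin (l + 2))) ∈ Set.range (D k l).eval := by
  suffices h : ∀ i ≤ k, ∀ S : Set (Fin (k + 2)), Fin.last _ ∈ S → 0 ∉ S →
      (∀ q ∈ S, k + 1 ≤ q.val + i) →
      ((S, ∅) : Set _ × Set (Fin (l + 2))) ∈ Set.range (D k l).eval from
    h k le_rfl S hlast h0 fun q hq => by
      have := Fin.pos_iff_ne_zero.2 (ne_of_mem_of_not_mem hq h0)
      omega
  intro i
  induction i with
  | zero =>
    intro _ S hlast _ hS
    obtain rfl : S = {Fin.last _} := Set.eq_singleton_iff_unique_mem.2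
      ⟨hlast, fun q hq => Fin.ext (by have := hS q hq; have := q.isLt; simp; omega)⟩
    exact ⟨[], D_start⟩
  | succ i ih =>
    intro hi S hlast h0 hS
    obtain ⟨x, hx⟩ := exists_D_evalFrom_push S (by omega) hlast h0 (l := l)
    rw [← hx]
    refine DFA.evalFrom_mem_range_eval (ih (by omega) _ (Or.inl rfl) ?_ ?_) _
    · rintro (h | ⟨h, -⟩)
      · exact Fin.last_pos.ne h
      · exact h rfl
    · rintro q (rfl | ⟨hq0, hq⟩)
      · simp
      · have := hS _ hq
        rw [Fin.val_sub_one_of_ne_zero hq0] at this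
        omega

theorem mk_empty_mem_range_D_eval (h0 : 0 ∉ S) (hne : S.Nonempty) :
    ((S, ∅) : Set _ × Set (Fin (l + 2))) ∈ Set.range (D k l).eval := by
  suffices h : ∀ i, ∀ S : Set (Fin (k + 2)), 0 ∉ S → (∃ q ∈ S, k + 1 ≤ q.val + i) →
      ((S, ∅) : Set _ × Set (Fin (l + 2))) ∈ Set.range (D k l).eval from
    let ⟨q, hq⟩ := hne; h (k + 1) S h0 ⟨q, hq, by omega⟩
  intro i
  induction i with
  | zero =>
    rintro S h0 ⟨q, hq, hqk⟩
    obtain rfl : q = Fin.last _ := Fin.ext (by have := q.isLt; simp; omega)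
    exact mk_empty_mem_range_D_eval_of_last_mem S hq h0
  | succ i ih =>
    rintro S h0 ⟨q, hq, hqi⟩
    by_cases hlast : Fin.last _ ∈ S
    · exact mk_empty_mem_range_D_eval_of_last_mem S hlast h0
    have hql : q ≠ Fin.last _ := ne_of_mem_of_not_mem hq hlast
    have h := ih ((· - 1) ⁻¹' S) (by simpa [Fin.neg_one_eq_last] using hlast)
      ⟨q + 1, by simpa using hq, by
        rw [Fin.val_add_one_of_lt (Fin.lt_last_iff_ne_last.2 hql)]; omega⟩
    have := DFA.evalFrom_mem_range_eval h [0]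
    rw [DFA.evalFrom_singleton, D_step_zero] at this
    simpa [h0, Set.preimage_preimage] using this

theorem mem_range_D_eval_of_zero_not_mem (h0 : 0 ∉ S) (hne : S.Nonempty) :
    (S, T) ∈ Set.range (D k l).eval := by
  suffices h : ∀ i, ∀ T : Set (Fin (l + 2)), (∀ t ∈ T, t.val < i) →
      (S, T) ∈ Set.range (D k l).eval from h (l + 2) T fun t _ => t.isLt
  intro i
  induction i with
  | zero =>
    intro T hT
    obtain rfl : T = ∅ := Set.eq_empty_of_forall_notMem fun t ht => by have := hT t ht; omega
    exact mk_empty_mem_range_D_eval S h0 hne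
  | succ i ih =>
    intro T hT
    have hshift : (D k l).evalFrom (S, {t | t + 1 ∈ T ∧ t + 1 ≠ 0}) [3] = (S, T \ {0}) := by
      rw [DFA.evalFrom_singleton, D_step_three]
      ext t <;> simp [h0]
    have h := DFA.evalFrom_mem_range_eval (ih {t | t + 1 ∈ T ∧ t + 1 ≠ 0} ?_) [3]
    · rw [hshift] at h
      by_cases h0T : 0 ∈ T
      · have := DFA.evalFrom_mem_range_eval h (List.replicate (k + 2) 0)
        rwa [D_evalFrom_replicate_zero_self _ _ hne, Set.insert_sdiff_singleton,
          Set.insert_eq_of_mem h0T] at this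
      · rwa [Set.sdiff_singleton_eq_self h0T] at h
    · rintro t ⟨ht, ht0⟩
      have := hT _ ht
      rw [Fin.val_add_one_of_lt
        (Fin.lt_last_iff_ne_last.2 (mt Fin.add_one_eq_zero_iff.2 ht0))] at this
      omega

theorem mem_range_D_eval_of_ne_univ (hne : S.Nonempty) (hS : S ≠ Set.univ) (h0T : 0 ∈ T) :
    (S, T) ∈ Set.range (D k l).eval := by
  obtain ⟨v, hv⟩ := (Set.ne_univ_iff_exists_notMem S).1 hS
  obtain ⟨s, hs⟩ := hne
  have h := mem_range_D_eval_of_zero_not_mem ((· + v) ⁻¹' S) T (by simpa using hv)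
    ⟨s - v, by simpa using hs⟩
  have := DFA.evalFrom_mem_range_eval h (List.replicate (-v).val 0)
  rw [D_evalFrom_replicate_zero, Fin.cast_val_eq_self,
    Set.union_eq_left.2 fun t ht => ht.2 ▸ h0T] at this
  simpa [Set.preimage_preimage] using this

theorem mem_range_D_eval (h : 0 ∈ S → 0 ∈ T) : (S, T) ∈ Set.range (D k l).eval := by
  have hpre : (fun q => (M k).step q 1) ⁻¹' {Fin.last _} = ∅ :=
    Set.eq_empty_of_forall_notMem M_step_one_ne_last
  by_cases h0 : 0 ∈ S
  · by_cases hS : S = Set.univ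
    · subst hS
      have := DFA.evalFrom_mem_range_eval (mem_range_D_eval_of_ne_univ {Fin.last (k + 1)}ᶜ T
        ⟨0, Fin.last_pos.ne⟩ (by simp) (h h0)) [1]
      rwa [DFA.evalFrom_singleton, D_step_one, Set.preimage_compl, hpre, Set.compl_empty,
        Set.union_eq_left.2 fun t ht => ht.2 ▸ h h0] at this
    · exact mem_range_D_eval_of_ne_univ S T ⟨0, h0⟩ hS (h h0)
  · rcases S.eq_empty_or_nonempty with rfl | hne
    · have := DFA.evalFrom_mem_range_eval (mem_range_D_eval_of_zero_not_mem {Fin.last (k + 1)} T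
        Fin.last_pos.ne (Set.singleton_nonempty _)) [1]
      rwa [DFA.evalFrom_singleton, D_step_one, hpre,
        Set.union_eq_left.2 fun t ht => absurd ht.1 (M_step_one_ne_last _)] at this
    · exact mem_range_D_eval_of_zero_not_mem S T h0 hne

end RevCatWitness

/-- Reversal combined with catenation: the bound (3/4)·2^(m+n) is reachable for m, n ≥ 2,
    with witnesses over a four-letter alphabet. -/
theorem revcat_lower_bound (m n : ℕ) (hm : 2 ≤ m) (hn : 2 ≤ n) :
    ∃ (M : DFA (Fin 4) (Fin m)) (N : DFA (Fin 4) (Fin n)),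
      ∀ (σ : Type) (inst : Fintype σ) (C : DFA (Fin 4) σ),
        C.accepts = revLang M.accepts * N.accepts →
        3 * 2 ^ (m + n - 2) ≤ @Fintype.card σ inst := by
  obtain ⟨k, rfl⟩ : ∃ k, m = k + 2 := ⟨m - 2, by omega⟩
  obtain ⟨l, rfl⟩ : ∃ l, n = l + 2 := ⟨n - 2, by omega⟩
  refine ⟨RevCatWitness.M k, RevCatWitness.N l, fun σ _ C hC => ?_⟩
  have hle := DFA.ncard_le_card_of_accepts_eq (hC.trans (DFA.accepts_revCat _ _).symm)
    (s := {p | 0 ∈ p.1 → 0 ∈ p.2}) (fun p hp => RevCatWitness.mem_range_D_eval p.1 p.2 hp)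
    RevCatWitness.D_acceptsFrom_injective.injOn
  have hcount := Set.four_mul_ncard_setOf_mem_imp_mem (0 : Fin (k + 2)) (0 : Fin (l + 2))
  have hpow : 2 ^ (k + 2) * 2 ^ (l + 2) = 4 * 2 ^ (k + 2 + (l + 2) - 2) := by
    rw [show k + 2 + (l + 2) - 2 = k + l + 2 by omega]
    ring
  rw [Nat.card_fin, Nat.card_fin, mul_assoc, hpow] at hcount
  rw [Nat.card_eq_fintype_card] at hle
  omega
end

section
/- For any integers m, n ≥ 2, the maximum over all regular languages L1 of state complexity m and L2 of state complexity n of the state complexity of L1^R · L2 equals (3/4)·2^(m+n). -/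
open Computability

/-- The state complexity of a language: the least number of states of a complete DFA
    accepting it. -/
noncomputable def stateComplexity {α : Type} (L : Language α) : ℕ :=
  sInf {k | ∃ (σ : Type) (inst : Fintype σ) (M : DFA α σ),
    @Fintype.card σ inst = k ∧ M.accepts = L}

/-!
After reading `w`, a DFA for `L₁ᴿ · L₂` only has to remember the set `S` of states of `M₁` from
which `wᴿ` is accepted, and the set `T` of states that `M₂` reaches on the suffixes `v` of the
factorisations `w = u v` with `uᴿ ∈ L₁`. The empty suffix puts the start state `s₂` of `M₂` into
`T` whenever the start state `s₁` of `M₁` lies in `S`, so only the `3 · 2^(m+n-2)` pairs with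
`s₁ ∈ S → s₂ ∈ T` occur.

For the lower bound the alphabet consists of all pairs of transformations of `Fin m` and `Fin n`.
Every admissible pair `(S, T)` is then reachable (`T` grows one state per letter) and any two are
separated by a word of length at most two, so by Myhill–Nerode this automaton is minimal.
-/

abbrev RevCatState {σ₁ σ₂ : Type} (s₁ : σ₁) (s₂ : σ₂) : Type :=
  {p : Set σ₁ × Set σ₂ // s₁ ∈ p.1 → s₂ ∈ p.2}

section RevCat

variable {α σ₁ σ₂ : Type} (M₁ : DFA α σ₁) (M₂ : DFA α σ₂)

def revCatDFA : DFA α (RevCatState M₁.start M₂.start) where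
  step p a :=
    ⟨({q | M₁.step q a ∈ p.1.1},
      (M₂.step · a) '' p.1.2 ∪ {t | t = M₂.start ∧ M₁.step M₁.start a ∈ p.1.1}),
      fun h => Or.inr ⟨rfl, h⟩⟩
  start := ⟨(M₁.accept, {t | t = M₂.start ∧ M₁.start ∈ M₁.accept}), fun h => ⟨rfl, h⟩⟩
  accept := {p | ∃ t ∈ p.1.2, t ∈ M₂.accept}

theorem revCatDFA_eval_fst (w : List α) :
    ((revCatDFA M₁ M₂).eval w).1.1 = {q | w.reverse ∈ M₁.acceptsFrom q} := by
  induction w using List.reverseRecOn with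
  | nil => rfl
  | append_singleton w a ih =>
    ext q
    rw [DFA.eval_append_singleton, List.reverse_append]
    change M₁.step q a ∈ ((revCatDFA M₁ M₂).eval w).1.1 ↔ _
    rw [ih]
    rfl

theorem revCatDFA_eval_snd (w : List α) (t : σ₂) :
    t ∈ ((revCatDFA M₁ M₂).eval w).1.2 ↔
      ∃ u v, u ++ v = w ∧ u.reverse ∈ M₁.accepts ∧ M₂.evalFrom M₂.start v = t := by
  induction w using List.reverseRecOn generalizing t with
  | nil =>
    refine ⟨fun ⟨ht, h⟩ => ⟨[], [], rfl, h, ht.symm⟩, ?_⟩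
    rintro ⟨u, v, huv, hu, rfl⟩
    obtain ⟨rfl, rfl⟩ := List.append_eq_nil_iff.mp huv
    exact ⟨rfl, hu⟩
  | append_singleton w a ih =>
    have hstart : M₁.step M₁.start a ∈ ((revCatDFA M₁ M₂).eval w).1.1 ↔
        (w ++ [a]).reverse ∈ M₁.accepts := by
      rw [revCatDFA_eval_fst, List.reverse_append]; rfl
    rw [DFA.eval_append_singleton]
    change t ∈ (M₂.step · a) '' ((revCatDFA M₁ M₂).eval w).1.2 ∪
        {t | t = M₂.start ∧ M₁.step M₁.start a ∈ ((revCatDFA M₁ M₂).eval w).1.1} ↔ _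
    simp only [Set.mem_union, Set.mem_image, ih, Set.mem_ofPred_eq, hstart]
    constructor
    · rintro (⟨_, ⟨u, v, rfl, hu, rfl⟩, rfl⟩ | ⟨rfl, h⟩)
      · exact ⟨u, v ++ [a], by simp, hu, DFA.evalFrom_append_singleton ..⟩
      · exact ⟨w ++ [a], [], List.append_nil _, h, rfl⟩
    · rintro ⟨u, v, huv, hu, rfl⟩
      rcases v.eq_nil_or_concat with rfl | ⟨v, b, rfl⟩
      · rw [List.append_nil] at huv
        exact Or.inr ⟨rfl, huv ▸ hu⟩
      · rw [List.concat_eq_append] at huv ⊢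
        rw [← List.append_assoc] at huv
        obtain ⟨rfl, h⟩ := List.append_inj' huv rfl
        obtain rfl : b = a := List.singleton_inj.mp h
        exact Or.inl ⟨_, ⟨u, v, rfl, hu, rfl⟩, (DFA.evalFrom_append_singleton ..).symm⟩

theorem revCatDFA_accepts : (revCatDFA M₁ M₂).accepts = revLang M₁.accepts * M₂.accepts := by
  ext w
  simp only [DFA.mem_accepts, Language.mem_mul]
  change (∃ t ∈ ((revCatDFA M₁ M₂).eval w).1.2, t ∈ M₂.accept) ↔ _
  simp only [revCatDFA_eval_snd]
  constructor
  · rintro ⟨_, ⟨u, v, huv, hu, rfl⟩, hv⟩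
    exact ⟨u, hu, v, hv, huv⟩
  · rintro ⟨u, hu, v, hv, huv⟩
    exact ⟨_, ⟨u, v, huv, hu, rfl⟩, hv⟩

end RevCat

open Classical in
theorem card_subtype_notMem_set {σ : Type} [Fintype σ] (s : σ) :
    Fintype.card {S : Set σ // s ∉ S} = Fintype.card {S : Set σ // s ∈ S} :=
  Fintype.card_congr <| (compl_involutive.toPerm _).subtypeEquiv fun S => by simp

open Classical in
theorem card_subtype_mem_set {σ : Type} [Fintype σ] (s : σ) :
    Fintype.card {S : Set σ // s ∈ S} = 2 ^ (Fintype.card σ - 1) := by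
  have hcompl := card_subtype_notMem_set s
  have hsum := Fintype.card_subtype_compl (fun S : Set σ => s ∈ S)
  have hle := Fintype.card_subtype_le (fun S : Set σ => s ∈ S)
  obtain ⟨k, hk⟩ := Nat.exists_eq_add_one_of_ne_zero (Fintype.card_pos_iff.mpr ⟨s⟩).ne'
  rw [Fintype.card_set, hk, pow_succ] at hsum hle
  rw [hk, Nat.add_sub_cancel]
  omega

open Classical in
theorem card_revCatState {σ₁ σ₂ : Type} [Fintype σ₁] [Fintype σ₂] (s₁ : σ₁) (s₂ : σ₂) :
    Fintype.card (RevCatState s₁ s₂) =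
      3 * 2 ^ (Fintype.card σ₁ + Fintype.card σ₂ - 2) := by
  have hbad : Fintype.card {p : Set σ₁ × Set σ₂ // s₁ ∈ p.1 ∧ s₂ ∉ p.2} =
      2 ^ (Fintype.card σ₁ - 1) * 2 ^ (Fintype.card σ₂ - 1) := by
    rw [Fintype.card_congr (Equiv.subtypeProdEquivProd (p := (s₁ ∈ ·)) (q := (s₂ ∉ ·))),
      Fintype.card_prod, card_subtype_notMem_set, card_subtype_mem_set, card_subtype_mem_set]
  have hgood := Fintype.card_subtype_compl (fun p : Set σ₁ × Set σ₂ => s₁ ∈ p.1 ∧ s₂ ∉ p.2)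
  simp only [not_and, not_not] at hgood
  rw [hgood, hbad, Fintype.card_prod, Fintype.card_set, Fintype.card_set]
  obtain ⟨a, ha⟩ := Nat.exists_eq_add_one_of_ne_zero (Fintype.card_pos_iff.mpr ⟨s₁⟩).ne'
  obtain ⟨b, hb⟩ := Nat.exists_eq_add_one_of_ne_zero (Fintype.card_pos_iff.mpr ⟨s₂⟩).ne'
  rw [ha, hb, Nat.add_sub_cancel, Nat.add_sub_cancel, show a + 1 + (b + 1) - 2 = a + b by omega,
    pow_succ, pow_succ, pow_add, show 2 ^ a * 2 * (2 ^ b * 2) = 4 * (2 ^ a * 2 ^ b) by ring]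
  omega

section StateComplexity

variable {α σ τ : Type}

theorem stateComplexity_le_card [Fintype σ] (M : DFA α σ) :
    stateComplexity M.accepts ≤ Fintype.card σ :=
  Nat.sInf_le ⟨σ, _, M, rfl, rfl⟩

theorem exists_dfa_card_eq_stateComplexity {L : Language α} (h : stateComplexity L ≠ 0) :
    ∃ (σ : Type) (_ : Fintype σ) (M : DFA α σ),
      Fintype.card σ = stateComplexity L ∧ M.accepts = L :=
  Nat.sInf_mem (Nat.nonempty_of_pos_sInf (Nat.pos_of_ne_zero h))

-- Myhill–Nerode: the left quotients of the language separate the states of `M`, and `N` has a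
-- state for each left quotient.
theorem DFA.card_le_card_of_accepts_eq [Fintype σ] [Fintype τ] {M : DFA α σ} {N : DFA α τ}
    (hreach : Function.Surjective M.eval) (hdist : Function.Injective M.acceptsFrom)
    (h : N.accepts = M.accepts) : Fintype.card σ ≤ Fintype.card τ := by
  refine Fintype.card_le_of_injective (fun s => N.eval (Function.surjInv hreach s))
    fun s s' hs => ?_
  apply hdist
  rw [← Function.surjInv_eq hreach s, ← Function.surjInv_eq hreach s',
    ← Language.leftQuotient_accepts_apply, ← Language.leftQuotient_accepts_apply, ← h,
    Language.leftQuotient_accepts_apply, Language.leftQuotient_accepts_apply]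
  exact congrArg N.acceptsFrom hs

theorem stateComplexity_accepts_eq_card [Fintype σ] {M : DFA α σ}
    (hreach : Function.Surjective M.eval) (hdist : Function.Injective M.acceptsFrom) :
    stateComplexity M.accepts = Fintype.card σ := by
  refine (stateComplexity_le_card M).antisymm ?_
  unfold stateComplexity
  refine le_csInf ⟨_, σ, ‹_›, M, rfl, rfl⟩ ?_
  rintro _ ⟨τ, _, N, rfl, hN⟩
  exact DFA.card_le_card_of_accepts_eq hreach hdist hN

end StateComplexity

theorem stateComplexity_revLang_mul_le {α : Type} {L₁ L₂ : Language α}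
    (h₁ : stateComplexity L₁ ≠ 0) (h₂ : stateComplexity L₂ ≠ 0) :
    stateComplexity (revLang L₁ * L₂) ≤
      3 * 2 ^ (stateComplexity L₁ + stateComplexity L₂ - 2) := by
  classical
  obtain ⟨σ₁, _, M₁, hc₁, rfl⟩ := exists_dfa_card_eq_stateComplexity h₁
  obtain ⟨σ₂, _, M₂, hc₂, rfl⟩ := exists_dfa_card_eq_stateComplexity h₂
  rw [← revCatDFA_accepts, ← hc₁, ← hc₂, ← card_revCatState M₁.start M₂.start]
  exact stateComplexity_le_card _

section Transformation

variable {β σ : Type} (π : β → σ → σ) (s f : σ)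

def transformationDFA : DFA β σ where
  step q a := π a q
  start := s
  accept := {f}

variable {π}

theorem transformationDFA_eval_surjective (hπ : Function.Surjective π) :
    Function.Surjective (transformationDFA π s f).eval := fun q => by
  obtain ⟨a, ha⟩ := hπ (Function.const σ q)
  exact ⟨[a], by simp [transformationDFA, ha]⟩

theorem transformationDFA_acceptsFrom_injective (hπ : Function.Surjective π) (hsf : s ≠ f) :
    Function.Injective (transformationDFA π s f).acceptsFrom := fun q q' h => by
  classical
  obtain ⟨a, ha⟩ := hπ fun x => if x = q then f else s
  have hmem : [a] ∈ (transformationDFA π s f).acceptsFrom q' := by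
    rw [← h]; simp [DFA.mem_acceptsFrom, transformationDFA, ha]
  by_contra hne
  simp [DFA.mem_acceptsFrom, transformationDFA, ha, Ne.symm hne, hsf] at hmem

theorem stateComplexity_transformationDFA [Fintype σ] (hπ : Function.Surjective π) (hsf : s ≠ f) :
    stateComplexity (transformationDFA π s f).accepts = Fintype.card σ :=
  stateComplexity_accepts_eq_card (transformationDFA_eval_surjective s f hπ)
    (transformationDFA_acceptsFrom_injective s f hπ hsf)

end Transformation

section Witness

variable {σ₁ σ₂ : Type} (s₁ f₁ : σ₁) (s₂ f₂ : σ₂)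

def revCatWitness : DFA ((σ₁ → σ₁) × (σ₂ → σ₂)) (RevCatState s₁ s₂) :=
  revCatDFA (transformationDFA (Prod.fst (β := σ₂ → σ₂)) s₁ f₁) (transformationDFA Prod.snd s₂ f₂)

theorem revCatWitness_step (P : RevCatState s₁ s₂) (f : σ₁ → σ₁) (g : σ₂ → σ₂) :
    ((revCatWitness s₁ f₁ s₂ f₂).step P (f, g)).1 =
      ({x | f x ∈ P.1.1}, g '' P.1.2 ∪ {t | t = s₂ ∧ f s₁ ∈ P.1.1}) :=
  rfl

theorem revCatWitness_start (h₁ : s₁ ≠ f₁) : (revCatWitness s₁ f₁ s₂ f₂).start.1 = ({f₁}, ∅) := by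
  ext t
  · rfl
  · exact iff_of_false (fun h => h₁ h.2) id

theorem revCatWitness_mem_accept (P : RevCatState s₁ s₂) :
    P ∈ (revCatWitness s₁ f₁ s₂ f₂).accept ↔ f₂ ∈ P.1.2 :=
  ⟨fun ⟨_, ht, rfl⟩ => ht, fun h => ⟨f₂, h, rfl⟩⟩

def revCatWitnessReachable : Set (Set σ₁ × Set σ₂) :=
  Set.range fun w => ((revCatWitness s₁ f₁ s₂ f₂).eval w).1

theorem revCatWitness_reach_step {S : Set σ₁} {T : Set σ₂}
    (hST : (S, T) ∈ revCatWitnessReachable s₁ f₁ s₂ f₂) {x y : σ₁} (hx : x ∈ S) (hy : y ∉ S)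
    (S' : Set σ₁) (g : σ₂ → σ₂) :
    (S', g '' T ∪ {t | t = s₂ ∧ s₁ ∈ S'}) ∈ revCatWitnessReachable s₁ f₁ s₂ f₂ := by
  classical
  obtain ⟨w, hw⟩ := hST
  have hpre : ∀ z, (if z ∈ S' then x else y) ∈ S ↔ z ∈ S' := fun z => by split_ifs <;> simp [*]
  refine ⟨w ++ [(fun z => if z ∈ S' then x else y, g)], ?_⟩
  simp only [DFA.eval_append_singleton, revCatWitness_step] at hw ⊢
  simp only [hw, hpre]
  rfl

theorem revCatWitness_reach_of_start (h₁ : s₁ ≠ f₁) (S : Set σ₁) :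
    (S, {t | t = s₂ ∧ s₁ ∈ S}) ∈ revCatWitnessReachable s₁ f₁ s₂ f₂ := by
  have h := revCatWitness_reach_step s₁ f₁ s₂ f₂ ⟨[], revCatWitness_start s₁ f₁ s₂ f₂ h₁⟩
    rfl h₁ S id
  rwa [Set.image_empty, Set.empty_union] at h

theorem revCatWitness_reach_singleton_insert (h₁ : s₁ ≠ f₁) (U : Finset σ₂) :
    ({s₁}, insert s₂ (U : Set σ₂)) ∈ revCatWitnessReachable s₁ f₁ s₂ f₂ := by
  classical
  induction U using Finset.induction_on with
  | empty =>
    convert revCatWitness_reach_of_start s₁ f₁ s₂ f₂ h₁ {s₁} using 2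
    ext t; simp
  | insert t U _ ih =>
    -- redirecting `s₂` to `t` and then re-adding `s₂` grows the second component by `t`
    convert revCatWitness_reach_step s₁ f₁ s₂ f₂ ih rfl h₁.symm {s₁} (Function.update id s₂ t)
      using 2
    ext z
    simp only [Finset.coe_insert, Set.mem_insert_iff, Set.mem_union, Set.mem_image,
      Set.mem_singleton_iff, Set.mem_ofPred_eq, and_true]
    constructor
    · rintro (rfl | rfl | hz)
      · exact Or.inr rfl
      · exact Or.inl ⟨s₂, Or.inl rfl, by simp⟩
      · by_cases hzs : z = s₂
        · exact Or.inr hzs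
        · exact Or.inl ⟨z, Or.inr hz, by simp [hzs]⟩
    · rintro (⟨u, hu, rfl⟩ | rfl)
      · by_cases hus : u = s₂
        · simp [hus]
        · simp only [Function.update_of_ne hus, id]
          tauto
      · exact Or.inl rfl

theorem revCatWitness_reach_of_nonempty [Finite σ₂] (h₁ : s₁ ≠ f₁) {S : Set σ₁} {T : Set σ₂}
    (hT : T.Nonempty) (hST : s₁ ∈ S → s₂ ∈ T) : (S, T) ∈ revCatWitnessReachable s₁ f₁ s₂ f₂ := by
  classical
  have _ := Fintype.ofFinite σ₂
  have huniv := revCatWitness_reach_singleton_insert s₁ f₁ s₂ f₂ h₁ Finset.univ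
  rw [Finset.coe_univ, Set.insert_eq_of_mem (Set.mem_univ _)] at huniv
  obtain ⟨t₀, ht₀⟩ := hT
  have hrange : Set.range (fun z => if z ∈ T then z else t₀) = T := by
    refine (Set.range_subset_iff.mpr fun z => ?_).antisymm fun z hz => ⟨z, if_pos hz⟩
    split_ifs with hz <;> assumption
  convert revCatWitness_reach_step s₁ f₁ s₂ f₂ huniv rfl h₁.symm S
    (fun z => if z ∈ T then z else t₀) using 2
  rw [Set.image_univ, hrange]
  refine (Set.union_eq_left.mpr ?_).symm
  rintro _ ⟨rfl, hs⟩
  exact hST hs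

theorem revCatWitness_eval_surjective [Finite σ₂] (h₁ : s₁ ≠ f₁) :
    Function.Surjective (revCatWitness s₁ f₁ s₂ f₂).eval := by
  rintro ⟨⟨S, T⟩, hST⟩
  suffices (S, T) ∈ revCatWitnessReachable s₁ f₁ s₂ f₂ from
    this.imp fun _ => Subtype.ext
  rcases T.eq_empty_or_nonempty with rfl | hT
  · convert revCatWitness_reach_of_start s₁ f₁ s₂ f₂ h₁ S
    exact (Set.eq_empty_of_forall_notMem fun _ ht => hST ht.2).symm
  · exact revCatWitness_reach_of_nonempty s₁ f₁ s₂ f₂ h₁ hT hST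

theorem revCatWitness_probe_mem_acceptsFrom [DecidableEq σ₂] (h₂ : s₂ ≠ f₂)
    (P : RevCatState s₁ s₂) (t : σ₂) :
    [(id, fun z => if z = t then f₂ else s₂)] ∈ (revCatWitness s₁ f₁ s₂ f₂).acceptsFrom P ↔
      t ∈ P.1.2 := by
  rw [DFA.mem_acceptsFrom, DFA.evalFrom_singleton, revCatWitness_mem_accept, revCatWitness_step]
  simp only [Set.mem_union, Set.mem_image, Set.mem_ofPred_eq]
  constructor
  · rintro (⟨z, hz, hzf⟩ | ⟨hf, _⟩)
    · split_ifs at hzf with hzt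
      exacts [hzt ▸ hz, absurd hzf h₂]
    · exact absurd hf.symm h₂
  · exact fun ht => Or.inl ⟨t, ht, if_pos rfl⟩

theorem revCatWitness_start_mem_step_const (h₂ : s₂ ≠ f₂)
    (P : RevCatState s₁ s₂) (q : σ₁) :
    s₂ ∈ ((revCatWitness s₁ f₁ s₂ f₂).step P (Function.const σ₁ q, Function.const σ₂ f₂)).1.2 ↔
      q ∈ P.1.1 := by
  rw [revCatWitness_step]
  simp [h₂.symm]

theorem revCatWitness_acceptsFrom_injective (h₂ : s₂ ≠ f₂) :
    Function.Injective (revCatWitness s₁ f₁ s₂ f₂).acceptsFrom := by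
  classical
  intro P P' h
  have hsnd : P.1.2 = P'.1.2 := by
    ext t
    rw [← revCatWitness_probe_mem_acceptsFrom s₁ f₁ s₂ f₂ h₂, h,
      revCatWitness_probe_mem_acceptsFrom s₁ f₁ s₂ f₂ h₂]
  have hfst : P.1.1 = P'.1.1 := by
    ext q
    have hword : ∀ Q : RevCatState s₁ s₂, q ∈ Q.1.1 ↔
        [(Function.const σ₁ q, Function.const σ₂ f₂), (id, fun z => if z = s₂ then f₂ else s₂)] ∈
          (revCatWitness s₁ f₁ s₂ f₂).acceptsFrom Q :=
      fun Q => by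
        rw [← revCatWitness_start_mem_step_const s₁ f₁ s₂ f₂ h₂,
          ← revCatWitness_probe_mem_acceptsFrom s₁ f₁ s₂ f₂ h₂]
        rfl
    rw [hword, h, hword]
  exact Subtype.ext (Prod.ext hfst hsnd)

theorem stateComplexity_revCatWitness [Fintype σ₁] [Fintype σ₂] (h₁ : s₁ ≠ f₁) (h₂ : s₂ ≠ f₂) :
    stateComplexity (revLang (transformationDFA (Prod.fst (β := σ₂ → σ₂)) s₁ f₁).accepts *
        (transformationDFA Prod.snd s₂ f₂).accepts) =
      3 * 2 ^ (Fintype.card σ₁ + Fintype.card σ₂ - 2) := by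
  classical
  rw [← revCatDFA_accepts, ← card_revCatState s₁ s₂]
  exact stateComplexity_accepts_eq_card (revCatWitness_eval_surjective s₁ f₁ s₂ f₂ h₁)
    (revCatWitness_acceptsFrom_injective s₁ f₁ s₂ f₂ h₂)

theorem exists_stateComplexity_revLang_mul_eq [Fintype σ₁] [Fintype σ₂]
    (h₁ : s₁ ≠ f₁) (h₂ : s₂ ≠ f₂) :
    ∃ (α : Type) (_ : Fintype α) (L₁ L₂ : Language α),
      stateComplexity L₁ = Fintype.card σ₁ ∧ stateComplexity L₂ = Fintype.card σ₂ ∧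
      stateComplexity (revLang L₁ * L₂) = 3 * 2 ^ (Fintype.card σ₁ + Fintype.card σ₂ - 2) := by
  classical
  exact ⟨_, inferInstance, _, _,
    stateComplexity_transformationDFA s₁ f₁ (Prod.fst_surjective (h := ⟨id⟩)) h₁,
    stateComplexity_transformationDFA s₂ f₂ (Prod.snd_surjective (h := ⟨id⟩)) h₂,
    stateComplexity_revCatWitness s₁ f₁ s₂ f₂ h₁ h₂⟩

end Witness

/-- The worst-case state complexity of L₁^R · L₂ over languages of state complexity m and n
    equals (3/4)·2^(m+n) for m, n ≥ 2. -/
theorem revcat_state_complexity (m n : ℕ) (hm : 2 ≤ m) (hn : 2 ≤ n) :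
    IsGreatest {k | ∃ (α : Type) (_ : Fintype α) (L₁ L₂ : Language α),
        stateComplexity L₁ = m ∧ stateComplexity L₂ = n ∧
        stateComplexity (revLang L₁ * L₂) = k}
      (3 * 2 ^ (m + n - 2)) := by
  constructor
  · have h₁ : (⟨0, by omega⟩ : Fin m) ≠ ⟨1, by omega⟩ := by simp
    have h₂ : (⟨0, by omega⟩ : Fin n) ≠ ⟨1, by omega⟩ := by simp
    simpa using exists_stateComplexity_revLang_mul_eq _ _ _ _ h₁ h₂
  · rintro k ⟨α, _, L₁, L₂, rfl, rfl, rfl⟩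
    exact stateComplexity_revLang_mul_le (by omega) (by omega)
end

section
/- If L1 is a language accepted by a complete DFA with exactly 1 state and L2 is accepted by a complete DFA with n ≥ 1 states, then L1^R · L2 is accepted by a complete DFA with at most 2^(n-1) states; moreover this bound is tight in the worst case. -/
open Computability

/-!
A one-state DFA accepts `∅` or `Σ*`, both invariant under reversal, so `L₁ᴿ · L₂` is `∅` or
`Σ* · L₂`. A DFA for `Σ* · L(B)` tracks the set of states `B` reaches on the suffixes of the input
read so far; that set always contains the start state of `B`, which leaves `2 ^ (n - 1)` states.
For tightness let the letters act on the states of `B` as all `n ^ n` self-maps, with start `s₀`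
and every other state accepting: each set containing `s₀` is reached by adding its states one at a
time, and two such sets differ at some `q ≠ s₀`, which the one-letter word collapsing every state
but `q` onto `s₀` detects.
-/

def setsContainingEquiv {σ : Type*} (a : σ) : {S : Set σ // a ∈ S} ≃ Set {x // x ≠ a} where
  toFun S := Subtype.val ⁻¹' S.1
  invFun T := ⟨insert a (Subtype.val '' T), Set.mem_insert a _⟩
  left_inv S := by
    ext x
    by_cases hx : x = a
    · simp [hx, S.2]
    · simp [hx]
  right_inv T := by
    ext ⟨x, hx⟩
    simp [hx]

theorem natCard_subtype_mem_set {σ : Type*} [Finite σ] (a : σ) :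
    Nat.card {S : Set σ // a ∈ S} = 2 ^ (Nat.card σ - 1) := by
  have := Fintype.ofFinite σ
  classical
  rw [Nat.card_congr (setsContainingEquiv a)]
  simp

namespace DFA

variable {α σ τ : Type*}

theorem revLang_accepts_of_subsingleton {α : Type} [Subsingleton σ] (M : DFA α σ) :
    revLang M.accepts = M.accepts := by
  ext w
  exact iff_of_eq (congrArg (· ∈ M.accept) (Subsingleton.elim _ _))

theorem accepts_eq_top_of_subsingleton [Subsingleton σ] (M : DFA α σ) (h : M.start ∈ M.accept) :
    M.accepts = ⊤ :=
  top_le_iff.1 fun w _ => show M.eval w ∈ M.accept by rwa [Subsingleton.elim (M.eval w) M.start]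

theorem accepts_eq_zero_of_subsingleton [Subsingleton σ] (M : DFA α σ) (h : M.start ∉ M.accept) :
    M.accepts = 0 := by
  ext w
  rw [mem_accepts, Subsingleton.elim (M.eval w) M.start]
  exact iff_of_false h (Language.notMem_zero w)

theorem card_le_card_of_accepts_eq_s3 [Finite τ] (M : DFA α σ) (C : DFA α τ)
    (hreach : Function.Surjective M.eval) (hdist : Function.Injective M.acceptsFrom)
    (h : C.accepts = M.accepts) : Nat.card σ ≤ Nat.card τ := by
  refine Nat.card_le_card_of_injective (C.eval ∘ Function.surjInv hreach) fun s t hst => ?_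
  have key (u : σ) : C.acceptsFrom (C.eval (Function.surjInv hreach u)) = M.acceptsFrom u := by
    rw [← Language.leftQuotient_accepts_apply, h, Language.leftQuotient_accepts_apply,
      Function.surjInv_eq hreach]
  exact hdist (by rw [← key, ← key]; exact congrArg C.acceptsFrom hst)

variable (M : DFA α σ)

def suffixDFA : DFA α {S : Set σ // M.start ∈ S} where
  step S a := ⟨insert M.start ((M.step · a) '' S.1), Set.mem_insert _ _⟩
  start := ⟨{M.start}, rfl⟩
  accept := {S | ∃ q ∈ S.1, q ∈ M.accept}

@[simp]
theorem coe_start_suffixDFA : M.suffixDFA.start.1 = {M.start} := rfl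

@[simp]
theorem coe_step_suffixDFA (S : {S : Set σ // M.start ∈ S}) (a : α) :
    (M.suffixDFA.step S a).1 = insert M.start ((M.step · a) '' S.1) := rfl

@[simp]
theorem mem_accept_suffixDFA (S : {S : Set σ // M.start ∈ S}) :
    S ∈ M.suffixDFA.accept ↔ ∃ q ∈ S.1, q ∈ M.accept := Iff.rfl

theorem coe_eval_suffixDFA (w : List α) :
    (M.suffixDFA.eval w).1 = M.eval '' {v | v <:+ w} := by
  induction w using List.reverseRecOn with
  | nil => ext q; simp
  | append_singleton w a ih =>
    ext q
    simp [ih, List.suffix_concat_iff, eval_append_singleton, eq_comm]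

theorem accepts_suffixDFA : M.suffixDFA.accepts = ⊤ * M.accepts := by
  ext w
  simp only [mem_accepts, mem_accept_suffixDFA, coe_eval_suffixDFA, Set.exists_mem_image,
    Set.mem_ofPred_eq, Language.mem_mul]
  exact ⟨fun ⟨v, ⟨u, huv⟩, hv⟩ => ⟨u, trivial, v, hv, huv⟩,
    fun ⟨u, _, v, hv, huv⟩ => ⟨v, ⟨u, huv⟩, hv⟩⟩

def transformationDFA (act : α → σ → σ) (s₀ : σ) : DFA α σ where
  step q a := act a q
  start := s₀
  accept := {s₀}ᶜ

variable {act : α → σ → σ} {s₀ : σ}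

theorem exists_coe_eval_suffixDFA_eq (hact : Function.Surjective act) {S : Set σ}
    (hS : S.Finite) : ∃ w, ((transformationDFA act s₀).suffixDFA.eval w).1 = insert s₀ S := by
  classical
  induction S, hS using Set.Finite.induction_on with
  | empty => exact ⟨[], by simp [transformationDFA]⟩
  | @insert s S _ _ ih =>
    obtain ⟨w, hw⟩ := ih
    obtain ⟨a, ha⟩ := hact (Function.update id s₀ s)
    refine ⟨w ++ [a], ?_⟩
    ext x
    rw [eval_append_singleton, coe_step_suffixDFA, hw]
    simp only [transformationDFA, ha, Function.update_apply, id_eq, Set.mem_insert_iff,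
      Set.mem_image, exists_eq_or_imp, ↓reduceIte]
    grind

theorem surjective_eval_suffixDFA [Finite σ] (hact : Function.Surjective act) :
    Function.Surjective (transformationDFA act s₀).suffixDFA.eval := fun S => by
  obtain ⟨w, hw⟩ := exists_coe_eval_suffixDFA_eq hact S.1.toFinite
  exact ⟨w, Subtype.ext (hw.trans (Set.insert_eq_of_mem S.2))⟩

theorem injective_acceptsFrom_suffixDFA (hact : Function.Surjective act) :
    Function.Injective (transformationDFA act s₀).suffixDFA.acceptsFrom := by
  classical
  intro S T hST
  refine Subtype.ext (Set.ext fun q => ?_)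
  by_cases hq : q = s₀
  · subst hq; exact iff_of_true S.2 T.2
  obtain ⟨a, ha⟩ := hact fun p => if p = q then q else s₀
  have key (U : {S : Set σ // s₀ ∈ S}) :
      [a] ∈ (transformationDFA act s₀).suffixDFA.acceptsFrom U ↔ q ∈ U.1 := by
    simp [mem_acceptsFrom, transformationDFA, ha, hq]
  rw [← key S, ← key T, hST]

end DFA

/-- For L₁ accepted by a 1-state DFA and L₂ by an n-state DFA (n ≥ 1), L₁^R·L₂ is accepted
    by a DFA with at most 2^(n-1) states, and this bound is tight in the worst case. -/
theorem revcat_m_eq_one (n : ℕ) (hn : 1 ≤ n) :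
    (∀ (α σ₁ σ₂ : Type) (i₁ : Fintype σ₁) (i₂ : Fintype σ₂)
        (A : DFA α σ₁) (B : DFA α σ₂),
      @Fintype.card σ₁ i₁ = 1 → @Fintype.card σ₂ i₂ = n →
      ∃ (σ : Type) (inst : Fintype σ) (C : DFA α σ),
        C.accepts = revLang A.accepts * B.accepts ∧
        @Fintype.card σ inst ≤ 2 ^ (n - 1)) ∧
    (∃ (k : ℕ) (A : DFA (Fin k) (Fin 1)) (B : DFA (Fin k) (Fin n)),
      ∀ (σ : Type) (inst : Fintype σ) (C : DFA (Fin k) σ),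
        C.accepts = revLang A.accepts * B.accepts →
        2 ^ (n - 1) ≤ @Fintype.card σ inst) := by
  refine ⟨fun α σ₁ σ₂ _ _ A B h₁ h₂ => ?_, ?_⟩
  · have : Subsingleton σ₁ := Fintype.card_le_one_iff_subsingleton.mp h₁.le
    rw [A.revLang_accepts_of_subsingleton]
    by_cases hA : A.start ∈ A.accept
    · refine ⟨_, Fintype.ofFinite _, B.suffixDFA, by rw [B.accepts_suffixDFA,
        A.accepts_eq_top_of_subsingleton hA], ?_⟩
      rw [Fintype.card_eq_nat_card, natCard_subtype_mem_set, Nat.card_eq_fintype_card, h₂]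
    · let C : DFA α Unit := ⟨fun _ _ => (), (), ∅⟩
      refine ⟨Unit, inferInstance, C, ?_, Nat.one_le_two_pow⟩
      rw [A.accepts_eq_zero_of_subsingleton hA, zero_mul,
        C.accepts_eq_zero_of_subsingleton (Set.notMem_empty _)]
  · let s₀ : Fin n := ⟨0, hn⟩
    let A : DFA (Fin (n ^ n)) (Fin 1) := ⟨fun _ _ => 0, 0, Set.univ⟩
    refine ⟨n ^ n, A, DFA.transformationDFA finFunctionFinEquiv.symm s₀, fun σ _ C hC => ?_⟩
    rw [A.revLang_accepts_of_subsingleton, A.accepts_eq_top_of_subsingleton (Set.mem_univ _),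
      ← DFA.accepts_suffixDFA] at hC
    calc 2 ^ (n - 1) = Nat.card {S : Set (Fin n) // s₀ ∈ S} := by simp [natCard_subtype_mem_set]
      _ ≤ Nat.card σ := DFA.card_le_card_of_accepts_eq_s3 _ C
          (DFA.surjective_eval_suffixDFA finFunctionFinEquiv.symm.surjective)
          (DFA.injective_acceptsFrom_suffixDFA finFunctionFinEquiv.symm.surjective) hC
      _ = Fintype.card σ := Fintype.card_eq_nat_card.symm
end

section
/- For any integer m ≥ 2, if L1 is accepted by a complete DFA with m states and L2 is accepted by a complete DFA with 1 state, then there exists a complete DFA with at most 2^(m-1) + 1 states accepting L1^R · L2. -/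
/-!
If `B` has a single state, `L₂` is `∅` or `Σ*`. In the first case `L₁ᴿ · L₂ = ∅`. In the second,
`L₁ᴿ · Σ*` consists of the words having a prefix in `L₁ᴿ`, so it is accepted by any DFA for `L₁ᴿ`
in which all accepting states are merged into one accepting sink. Applied to the subset automaton
of the reversal of `A`, whose accepting subsets are those containing the start state of `A`, this
leaves the `2 ^ (m - 1)` subsets avoiding that state, plus the sink.
-/

open Computability

theorem Language.mem_mul_top {α : Type*} {K : Language α} {w : List α} :
    w ∈ K * ⊤ ↔ ∃ p, p <+: w ∧ p ∈ K := by
  simp only [Language.mem_mul]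
  exact ⟨fun ⟨p, hp, q, _, hpq⟩ => ⟨p, ⟨q, hpq⟩, hp⟩,
    fun ⟨p, ⟨q, hpq⟩, hp⟩ => ⟨p, hp, q, trivial, hpq⟩⟩

theorem Nat.card_set_notMem {σ : Type*} [Finite σ] (a : σ) :
    Nat.card {S : Set σ // a ∉ S} = 2 ^ (Nat.card σ - 1) := by
  classical
  have := Fintype.ofFinite σ
  rw [Nat.card_congr ((Equiv.subtypeEquivRight fun S => by
      simp [Set.subset_compl_singleton_iff]).trans (Equiv.Set.powerset ({a}ᶜ : Set σ))),
    Nat.card_eq_fintype_card, Fintype.card_set, Fintype.card_compl_set, Set.card_singleton,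
    Nat.card_eq_fintype_card]

namespace DFA

variable {α σ : Type*} (M : DFA α σ)

theorem accepts_eq_top_or_eq_zero [Subsingleton σ] : M.accepts = ⊤ ∨ M.accepts = 0 := by
  by_cases h : M.start ∈ M.accept
  · refine .inl (Language.ext fun w => iff_of_true ?_ trivial)
    rwa [mem_accepts, Subsingleton.elim (M.eval w) M.start]
  · refine .inr (Language.ext fun w => iff_of_false ?_ (Language.notMem_zero w))
    rwa [mem_accepts, Subsingleton.elim (M.eval w) M.start]

theorem accepts_toNFA_reverse_toDFA : M.toNFA.reverse.toDFA.accepts = M.accepts.reverse := by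
  ext w
  rw [NFA.toDFA_correct, NFA.mem_accepts_reverse, toNFA_correct, Language.mem_reverse]

theorem notMem_toNFA_reverse_toDFA_accept_iff {S : Set σ} :
    S ∉ M.toNFA.reverse.toDFA.accept ↔ M.start ∉ S := by
  simp [NFA.toDFA, toNFA]

section MulTop

variable [DecidablePred (· ∈ M.accept)]

def absorb (q : σ) : Option {q // q ∉ M.accept} :=
  if h : q ∈ M.accept then none else some ⟨q, h⟩

theorem absorb_eq_none_iff {q : σ} : M.absorb q = none ↔ q ∈ M.accept := by
  unfold absorb
  split_ifs with h <;> simp [h]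

theorem absorb_of_notMem {q : σ} (h : q ∉ M.accept) : M.absorb q = some ⟨q, h⟩ := dif_neg h

theorem ite_absorb {c : Prop} [Decidable c] {q : σ} (h : c ↔ q ∈ M.accept) :
    (if c then none else M.absorb q) = M.absorb q := by
  split_ifs with hc
  · exact (M.absorb_eq_none_iff.2 (h.1 hc)).symm
  · rfl

/-- `M` with all its accepting states merged into the accepting sink `none`. -/
def mulTop : DFA α (Option {q // q ∉ M.accept}) where
  step q a := q.bind fun q => M.absorb (M.step q a)
  start := M.absorb M.start
  accept := {none}

open Classical in
theorem eval_mulTop (w : List α) : M.mulTop.eval w =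
    if ∃ p, p <+: w ∧ p ∈ M.accepts then none else M.absorb (M.eval w) := by
  induction w using List.reverseRecOn with
  | nil => exact (M.ite_absorb (by simp [mem_accepts])).symm
  | append_singleton w a ih =>
    rw [eval_append_singleton, ih]
    by_cases hw : ∃ p, p <+: w ∧ p ∈ M.accepts
    · obtain ⟨p, hp, hpM⟩ := hw
      rw [if_pos ⟨p, hp, hpM⟩, if_pos ⟨p, hp.trans (List.prefix_append w [a]), hpM⟩]
      rfl
    · have hwa : (∃ p, p <+: w ++ [a] ∧ p ∈ M.accepts) ↔ w ++ [a] ∈ M.accepts := by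
        simp only [List.prefix_concat_iff, or_and_right, exists_or, exists_eq_left]
        exact or_iff_left hw
      rw [if_neg hw, M.ite_absorb (q := M.eval (w ++ [a])) hwa,
        M.absorb_of_notMem (q := M.eval w) fun h => hw ⟨w, w.prefix_refl, h⟩,
        eval_append_singleton]
      rfl

theorem accepts_mulTop : M.mulTop.accepts = M.accepts * ⊤ := by
  classical
  ext w
  rw [mem_accepts, Language.mem_mul_top, eval_mulTop]
  split_ifs with h
  · simpa [mulTop] using h
  · simp only [mulTop, Set.mem_singleton_iff, absorb_eq_none_iff, h, iff_false]
    exact fun hw => h ⟨w, w.prefix_refl, hw⟩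

end MulTop

end DFA

theorem revcat_n_eq_one_upper_general (m : ℕ)
    (α σ₁ σ₂ : Type) [Fintype σ₁] [Fintype σ₂]
    (A : DFA α σ₁) (B : DFA α σ₂) (L₁ L₂ : Language α)
    (hA : A.accepts = L₁) (hB : B.accepts = L₂)
    (hcm : Fintype.card σ₁ = m) (hcn : Fintype.card σ₂ = 1) :
    ∃ (σ : Type) (inst : Fintype σ) (C : DFA α σ),
      C.accepts = revLang L₁ * L₂ ∧ @Fintype.card σ inst ≤ 2 ^ (m - 1) + 1 := by
  classical
  have : Subsingleton σ₂ := Fintype.card_le_one_iff_subsingleton.mp hcn.le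
  subst hA hB hcm
  rcases B.accepts_eq_top_or_eq_zero with hB | hB
  · refine ⟨_, inferInstance, A.toNFA.reverse.toDFA.mulTop, ?_, le_of_eq ?_⟩
    · rw [DFA.accepts_mulTop, DFA.accepts_toNFA_reverse_toDFA, hB]
      rfl
    · rw [Fintype.card_option, ← Nat.card_eq_fintype_card, ← Nat.card_eq_fintype_card,
        Nat.card_congr (Equiv.subtypeEquivRight fun S => A.notMem_toNFA_reverse_toDFA_accept_iff),
        Nat.card_set_notMem]
  · refine ⟨Unit, inferInstance, ⟨fun _ _ => (), (), ∅⟩, ?_, by simp⟩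
    rw [hB, mul_zero]
    ext w
    simp [DFA.mem_accepts]

/-- For L₁ accepted by an m-state DFA (m ≥ 2) and L₂ by a 1-state DFA, there is a DFA with
    at most 2^(m-1)+1 states accepting L₁^R·L₂. -/
theorem revcat_n_eq_one_upper (m : ℕ) (hm : 2 ≤ m)
    (α σ₁ σ₂ : Type) [Fintype σ₁] [Fintype σ₂]
    (A : DFA α σ₁) (B : DFA α σ₂) (L₁ L₂ : Language α)
    (hA : A.accepts = L₁) (hB : B.accepts = L₂)
    (hcm : Fintype.card σ₁ = m) (hcn : Fintype.card σ₂ = 1) :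
    ∃ (σ : Type) (inst : Fintype σ) (C : DFA α σ),
      C.accepts = revLang L₁ * L₂ ∧ @Fintype.card σ inst ≤ 2 ^ (m - 1) + 1 :=
  revcat_n_eq_one_upper_general m α σ₁ σ₂ A B L₁ L₂ hA hB hcm hcn
end

section
/- For any integer m ≥ 4, there exists a complete DFA M with m states over the alphabet {a,b,c,d} and a 1-state complete DFA N accepting Σ* such that every complete DFA accepting L(M)^R · L(N) = L(M)^R · Σ* has at least 2^(m-1) + 1 states. -/
open Computability

namespace Revcat

lemma evalFrom_cons {α σ : Type*} (M : DFA α σ) (s : σ) (a : α) (x : List α) :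
    M.evalFrom s (a :: x) = M.evalFrom (M.step s a) x := rfl

variable (m : ℕ)

def mstep (hm : 4 ≤ m) (q : Fin m) (x : Fin 4) : Fin m :=
  if x.val = 0 then ⟨(q.val + 1) % m, Nat.mod_lt _ (by omega)⟩
  else if x.val = 1 then (if q.val = m - 1 then ⟨m - 2, by omega⟩ else q)
  else if x.val = 2 then
    (if q.val = m - 1 then ⟨m - 2, by omega⟩
     else if q.val = m - 2 then ⟨m - 1, by omega⟩ else q)
  else
    (if q.val = 0 then q
     else if h1 : q.val = m - 1 then ⟨1, by omega⟩
     else ⟨q.val + 1, by have := q.isLt; omega⟩)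

lemma lv0 : ((0 : Fin 4)).val = 0 := rfl
lemma lv1 : ((1 : Fin 4)).val = 1 := rfl
lemma lv2 : ((2 : Fin 4)).val = 2 := rfl
lemma lv3 : ((3 : Fin 4)).val = 3 := rfl

def MM (hm : 4 ≤ m) : DFA (Fin 4) (Fin m) where
  step := mstep m hm
  start := ⟨0, by omega⟩
  accept := {⟨m - 1, by omega⟩}

def emb (i : Fin (m - 1)) : Fin m := ⟨i.val + 1, by have := i.isLt; omega⟩

def lastS (hm : 4 ≤ m) : Fin m := ⟨m - 1, by omega⟩

def GoodF (hm : 4 ≤ m) (f : Fin (m - 1) → Bool) : Prop :=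
  ∃ z : List (Fin 4),
    (∀ i : Fin (m - 1), ((MM m hm).evalFrom (emb m i) z = lastS m hm ↔ f i = true)) ∧
    (∀ s ∈ z.tails, (MM m hm).evalFrom ⟨0, by omega⟩ s ≠ lastS m hm)

variable {m} (hm : 4 ≤ m)

-- letter step computations
lemma step_a (q : Fin m) : mstep m hm q 0 = ⟨(q.val + 1) % m, Nat.mod_lt _ (by omega)⟩ := by
  simp [mstep, lv0]

lemma step_b (q : Fin m) :
    mstep m hm q 1 = if q.val = m - 1 then ⟨m - 2, by omega⟩ else q := by
  simp [mstep, lv1]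

lemma step_c (q : Fin m) :
    mstep m hm q 2 = (if q.val = m - 1 then ⟨m - 2, by omega⟩
     else if q.val = m - 2 then ⟨m - 1, by omega⟩ else q) := by
  simp [mstep, lv2]

lemma step_d (q : Fin m) (h0 : q.val ≠ 0) (h1 : q.val ≠ m - 1) :
    mstep m hm q 3 = ⟨q.val + 1, by have := q.isLt; omega⟩ := by
  simp [mstep, lv3, h0, h1]

lemma step_d_zero (q : Fin m) (h0 : q.val = 0) : mstep m hm q 3 = q := by
  simp [mstep, lv3, h0]

lemma step_d_top (q : Fin m) (h1 : q.val = m - 1) (h0 : q.val ≠ 0) :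
    mstep m hm q 3 = ⟨1, by omega⟩ := by
  simp [mstep, lv3, h0, h1]
  intro h; omega


lemma stepMM : (MM m hm).step = mstep m hm := rfl

lemma emb_val (i : Fin (m - 1)) : (emb m i).val = i.val + 1 := rfl

lemma good0 : GoodF m hm (fun i => decide (i.val = m - 2)) := by
  refine ⟨[], ?_, ?_⟩
  · intro i
    have hi := i.isLt
    simp only [DFA.evalFrom, List.foldl_nil, decide_eq_true_eq]
    rw [Fin.ext_iff]
    simp only [emb_val, lastS]
    omega
  · intro s hs
    rw [List.mem_tails] at hs
    rw [List.suffix_nil] at hs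
    subst hs
    simp only [DFA.evalFrom, List.foldl_nil, ne_eq, lastS, Fin.ext_iff]
    omega

lemma goodb {f : Fin (m - 1) → Bool} (hf : GoodF m hm f) :
    GoodF m hm (fun i => if i.val = m - 2 then f ⟨m - 3, by omega⟩ else f i) := by
  obtain ⟨z, h1, h2⟩ := hf
  refine ⟨1 :: z, ?_, ?_⟩
  · intro i
    have hi := i.isLt
    rw [evalFrom_cons, stepMM, step_b hm]
    by_cases hc : i.val = m - 2
    · rw [if_pos (show (emb m i).val = m - 1 by rw [emb_val]; omega)]
      have he : (⟨m - 2, by omega⟩ : Fin m) = emb m ⟨m - 3, by omega⟩ := by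
        apply Fin.ext; show m - 2 = m - 3 + 1; omega
      rw [he, h1]; simp only []; rw [if_pos hc]
    · rw [if_neg (show ¬ (emb m i).val = m - 1 by rw [emb_val]; omega)]
      rw [h1]; simp only []; rw [if_neg hc]
  · intro s hs
    rw [List.tails_cons, List.mem_cons] at hs
    rcases hs with rfl | hs
    · rw [evalFrom_cons, stepMM, step_b hm]
      rw [if_neg (by simp; omega)]
      exact h2 z (by simp [List.mem_tails])
    · exact h2 s hs

lemma goodc {f : Fin (m - 1) → Bool} (hf : GoodF m hm f) :
    GoodF m hm (fun i => if i.val = m - 2 then f ⟨m - 3, by omega⟩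
      else if i.val = m - 3 then f ⟨m - 2, by omega⟩ else f i) := by
  obtain ⟨z, h1, h2⟩ := hf
  refine ⟨2 :: z, ?_, ?_⟩
  · intro i
    have hi := i.isLt
    rw [evalFrom_cons, stepMM, step_c hm]
    by_cases hc : i.val = m - 2
    · rw [if_pos (show (emb m i).val = m - 1 by rw [emb_val]; omega)]
      have he : (⟨m - 2, by omega⟩ : Fin m) = emb m ⟨m - 3, by omega⟩ := by
        apply Fin.ext; show m - 2 = m - 3 + 1; omega
      rw [he, h1]; simp only []; rw [if_pos hc]
    · rw [if_neg (show ¬ (emb m i).val = m - 1 by rw [emb_val]; omega)]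
      by_cases hc3 : i.val = m - 3
      · rw [if_pos (show (emb m i).val = m - 2 by rw [emb_val]; omega)]
        have he : (⟨m - 1, by omega⟩ : Fin m) = emb m ⟨m - 2, by omega⟩ := by
          apply Fin.ext; show m - 1 = m - 2 + 1; omega
        rw [he, h1]; simp only []; rw [if_neg hc, if_pos hc3]
      · rw [if_neg (show ¬ (emb m i).val = m - 2 by rw [emb_val]; omega)]
        rw [h1]; simp only []; rw [if_neg hc, if_neg hc3]
  · intro s hs
    rw [List.tails_cons, List.mem_cons] at hs
    rcases hs with rfl | hs
    · rw [evalFrom_cons, stepMM, step_c hm]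
      rw [if_neg (by simp; omega), if_neg (by simp; omega)]
      exact h2 z (by simp [List.mem_tails])
    · exact h2 s hs

lemma goodd {f : Fin (m - 1) → Bool} (hf : GoodF m hm f) :
    GoodF m hm (fun i => f ⟨(i.val + 1) % (m - 1), Nat.mod_lt _ (by omega)⟩) := by
  obtain ⟨z, h1, h2⟩ := hf
  refine ⟨3 :: z, ?_, ?_⟩
  · intro i
    have hi := i.isLt
    rw [evalFrom_cons, stepMM]
    by_cases hc : i.val = m - 2
    · rw [step_d_top hm _ (by rw [emb_val]; omega) (by rw [emb_val]; omega)]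
      have he : (⟨1, by omega⟩ : Fin m) = emb m ⟨(i.val + 1) % (m - 1), Nat.mod_lt _ (by omega)⟩ := by
        apply Fin.ext; show 1 = (i.val + 1) % (m - 1) + 1
        have : (i.val + 1) % (m - 1) = 0 := by
          rw [hc]; rw [show m - 2 + 1 = m - 1 by omega, Nat.mod_self]
        omega
      rw [he, h1]
    · rw [step_d hm _ (by rw [emb_val]; omega) (by rw [emb_val]; intro h; exact hc (by omega))]
      have he : (⟨(emb m i).val + 1, by have h5 := i.isLt; rw [emb_val]; omega⟩ : Fin m)
          = emb m ⟨(i.val + 1) % (m - 1), Nat.mod_lt _ (by omega)⟩ := by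
        apply Fin.ext; show (emb m i).val + 1 = (i.val + 1) % (m - 1) + 1
        rw [emb_val, Nat.mod_eq_of_lt (by omega)]
      rw [he, h1]
  · intro s hs
    rw [List.tails_cons, List.mem_cons] at hs
    rcases hs with rfl | hs
    · rw [evalFrom_cons, stepMM, step_d_zero hm _ rfl]
      exact h2 z (by simp [List.mem_tails])
    · exact h2 s hs

lemma finRotate_val {n : ℕ} (i : Fin n) :
    (finRotate n i).val = if i.val = n - 1 then 0 else i.val + 1 := by
  cases n with
  | zero => exact i.elim0
  | succ k =>
    rw [coe_finRotate]
    by_cases hc : i = Fin.last k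
    · rw [if_pos hc, if_pos (by rw [hc, Fin.val_last]; omega)]
    · rw [if_neg hc, if_neg (fun h => hc (Fin.ext (by rw [Fin.val_last]; omega)))]

section Perms

/-- the set of permutations preserving goodness -/
def HH : Subgroup (Equiv.Perm (Fin (m - 1))) where
  carrier := {σ | ∀ f, GoodF m hm f → GoodF m hm (fun i => f (σ i))}
  one_mem' := fun f hf => hf
  mul_mem' := fun ha hb f hf => hb _ (ha f hf)
  inv_mem' := by
    intro σ hσ
    have hpow : ∀ j : ℕ, ∀ f, GoodF m hm f → GoodF m hm (fun i => f ((σ ^ j) i)) := by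
      intro j
      induction j with
      | zero => rw [pow_zero]; exact fun f hf => hf
      | succ j ih => rw [pow_succ]; exact fun f hf => hσ _ (ih f hf)
    have ho : 0 < orderOf σ := orderOf_pos σ
    have h1 : σ * σ ^ (orderOf σ - 1) = 1 := by
      rw [← pow_succ', Nat.sub_add_cancel ho]
      exact pow_orderOf_eq_one σ
    have he : σ⁻¹ = σ ^ (orderOf σ - 1) := (eq_inv_of_mul_eq_one_right h1).symm
    intro f hf
    rw [he]
    exact hpow _ f hf

lemma rot_mem : finRotate (m - 1) ∈ HH hm := by
  intro f hf
  have h := goodd hm hf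
  have he : (fun (i : Fin (m - 1)) => f ⟨(i.val + 1) % (m - 1), Nat.mod_lt _ (by omega)⟩)
      = fun i => f (finRotate (m - 1) i) := by
    funext i
    congr 1
    apply Fin.ext
    rw [finRotate_val]
    have hi := i.isLt
    by_cases hc : i.val = m - 1 - 1
    · rw [if_pos hc, Fin.val_mk, show i.val + 1 = m - 1 by omega, Nat.mod_self]
    · rw [if_neg hc, Fin.val_mk, Nat.mod_eq_of_lt (by omega)]
  rw [← he]
  exact h

lemma rot_apply_jA : finRotate (m - 1) (⟨m - 3, by omega⟩ : Fin (m - 1)) = ⟨m - 2, by omega⟩ := by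
  apply Fin.ext
  rw [finRotate_val, Fin.val_mk, Fin.val_mk, if_neg (by omega)]
  omega

lemma swap_mem : Equiv.swap (⟨m - 3, by omega⟩ : Fin (m - 1)) ⟨m - 2, by omega⟩ ∈ HH hm := by
  intro f hf
  have h := goodc hm hf
  have he : (fun (i : Fin (m - 1)) => if i.val = m - 2 then f ⟨m - 3, by omega⟩
        else if i.val = m - 3 then f ⟨m - 2, by omega⟩ else f i)
      = fun i => f (Equiv.swap (⟨m - 3, by omega⟩ : Fin (m - 1)) ⟨m - 2, by omega⟩ i) := by
    funext i
    by_cases h2 : i = (⟨m - 3, by omega⟩ : Fin (m - 1))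
    · rw [h2, Equiv.swap_apply_left]
      rw [if_neg (by rw [Fin.val_mk]; omega), if_pos (by rw [Fin.val_mk])]
    · by_cases h3 : i = (⟨m - 2, by omega⟩ : Fin (m - 1))
      · rw [h3, Equiv.swap_apply_right]
        rw [if_pos (by rw [Fin.val_mk])]
      · rw [Equiv.swap_apply_of_ne_of_ne h2 h3]
        rw [if_neg (fun hc => h3 (Fin.ext (by rw [Fin.val_mk]; exact hc))),
          if_neg (fun hc => h2 (Fin.ext (by rw [Fin.val_mk]; exact hc)))]
  rw [← he]
  exact h

lemma perm_good (σ : Equiv.Perm (Fin (m - 1))) :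
    ∀ f, GoodF m hm f → GoodF m hm (fun i => f (σ i)) := by
  have hcyc : (finRotate (m - 1)).IsCycle := isCycle_finRotate_of_le (by omega)
  have hsupp : (finRotate (m - 1)).support = Finset.univ := support_finRotate_of_le (by omega)
  have hcl := Equiv.Perm.closure_cycle_adjacent_swap hcyc hsupp (⟨m - 3, by omega⟩ : Fin (m - 1))
  have hle : Subgroup.closure {finRotate (m - 1),
      Equiv.swap (⟨m - 3, by omega⟩ : Fin (m - 1)) (finRotate (m - 1) ⟨m - 3, by omega⟩)} ≤ HH hm := by
    rw [Subgroup.closure_le]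
    intro τ hτ
    rcases hτ with rfl | hτ
    · exact rot_mem hm
    · rw [Set.mem_singleton_iff] at hτ
      subst hτ
      rw [rot_apply_jA hm]
      exact swap_mem hm
  have : σ ∈ Subgroup.closure {finRotate (m - 1),
      Equiv.swap (⟨m - 3, by omega⟩ : Fin (m - 1)) (finRotate (m - 1) ⟨m - 3, by omega⟩)} := by
    rw [hcl]; exact Subgroup.mem_top σ
  exact hle this

end Perms

lemma good_uk : ∀ k, k ≤ m - 1 → GoodF m hm (fun i => decide (m - 1 ≤ i.val + k)) := by
  intro k
  induction k with
  | zero =>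
    intro _
    have h := goodb hm (good0 hm)
    have he : (fun (i : Fin (m - 1)) => if i.val = m - 2 then
          (fun (j : Fin (m - 1)) => decide (j.val = m - 2)) ⟨m - 3, by omega⟩
          else (fun (j : Fin (m - 1)) => decide (j.val = m - 2)) i)
        = fun (i : Fin (m - 1)) => decide (m - 1 ≤ i.val + 0) := by
      funext i
      have hi := i.isLt
      by_cases hc : i.val = m - 2
      · rw [if_pos hc]
        show decide ((⟨m - 3, by omega⟩ : Fin (m - 1)).val = m - 2) = _
        rw [Fin.val_mk, decide_eq_decide]
        omega
      · rw [if_neg hc]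
        show decide (i.val = m - 2) = decide (m - 1 ≤ i.val + 0)
        rw [decide_eq_decide]
        omega
    rw [← he]
    exact h
  | succ k ih =>
    intro hk1
    rcases Nat.eq_zero_or_pos k with rfl | hpos
    · have h := good0 hm
      have he : (fun (i : Fin (m - 1)) => decide (i.val = m - 2))
          = fun (i : Fin (m - 1)) => decide (m - 1 ≤ i.val + (0 + 1)) := by
        funext i
        have hi := i.isLt
        rw [decide_eq_decide]
        omega
      rw [← he]
      exact h
    · have h := goodb hm (goodd hm (ih (by omega)))
      have he : (fun (i : Fin (m - 1)) => if i.val = m - 2 then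
            (fun (j : Fin (m - 1)) => decide (m - 1 ≤ (j.val + 1) % (m - 1) + k)) ⟨m - 3, by omega⟩
            else (fun (j : Fin (m - 1)) => decide (m - 1 ≤ (j.val + 1) % (m - 1) + k)) i)
          = fun (i : Fin (m - 1)) => decide (m - 1 ≤ i.val + (k + 1)) := by
        funext i
        have hi := i.isLt
        by_cases hc : i.val = m - 2
        · rw [if_pos hc]
          show decide (m - 1 ≤ ((⟨m - 3, by omega⟩ : Fin (m - 1)).val + 1) % (m - 1) + k) = _
          rw [Fin.val_mk, Nat.mod_eq_of_lt (by omega), decide_eq_decide]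
          omega
        · rw [if_neg hc]
          show decide (m - 1 ≤ (i.val + 1) % (m - 1) + k) = _
          rw [Nat.mod_eq_of_lt (by omega), decide_eq_decide]
          omega
      rw [← he]
      exact h

lemma card_uk (k : ℕ) (hk : k ≤ m - 1) :
    Fintype.card {i : Fin (m - 1) // decide (m - 1 ≤ i.val + k) = true} = k := by
  have e : {i : Fin (m - 1) // decide (m - 1 ≤ i.val + k) = true} ≃ Fin k :=
    { toFun := fun s => ⟨s.1.val - (m - 1 - k), by
        have h2 := of_decide_eq_true s.2
        have h3 := s.1.isLt
        omega⟩
      invFun := fun j => ⟨⟨j.val + (m - 1 - k), by have := j.isLt; omega⟩,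
        decide_eq_true (show m - 1 ≤ j.val + (m - 1 - k) + k by have := j.isLt; omega)⟩
      left_inv := fun s => by
        apply Subtype.ext
        apply Fin.ext
        rw [Fin.val_mk]
        have h2 := of_decide_eq_true s.2
        have h3 := s.1.isLt
        rw [Fin.val_mk]
        omega
      right_inv := fun j => by
        apply Fin.ext
        rw [Fin.val_mk, Fin.val_mk]
        have := j.isLt
        omega }
  rw [Fintype.card_congr e, Fintype.card_fin]

lemma exists_perm {n : ℕ} (f g : Fin n → Bool)
    (h : Fintype.card {i // f i = true} = Fintype.card {i // g i = true}) :
    ∃ σ : Equiv.Perm (Fin n), ∀ i, f i = g (σ i) := by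
  classical
  have h2 : Fintype.card {i // ¬ f i = true} = Fintype.card {i // ¬ g i = true} := by
    rw [Fintype.card_subtype_compl, Fintype.card_subtype_compl, h]
  let ep := Fintype.equivOfCardEq h
  let en := Fintype.equivOfCardEq h2
  refine ⟨Equiv.subtypeCongr ep en, fun i => ?_⟩
  by_cases hi : f i = true
  · have hv : Equiv.subtypeCongr ep en i = (ep ⟨i, hi⟩ : {i // g i = true}).1 := by
      simp [Equiv.subtypeCongr, hi]
    rw [hv, hi, (ep ⟨i, hi⟩).2]
  · have hv : Equiv.subtypeCongr ep en i = (en ⟨i, hi⟩ : {i // ¬ g i = true}).1 := by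
      simp [Equiv.subtypeCongr, hi]
    rw [hv]
    rw [Bool.not_eq_true] at hi
    have h3 := (en ⟨i, by simp [hi]⟩).2
    rw [Bool.not_eq_true] at h3
    rw [hi, h3]

theorem allGood (f : Fin (m - 1) → Bool) : GoodF m hm f := by
  classical
  obtain ⟨σ, hσ⟩ := exists_perm f
    (fun i => decide (m - 1 ≤ i.val + Fintype.card {i : Fin (m - 1) // f i = true}))
    (by
      have hc := card_uk (m := m) (Fintype.card {i : Fin (m - 1) // f i = true})
        (by simpa using Fintype.card_subtype_le (fun i : Fin (m - 1) => f i = true))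
      simpa using hc.symm)
  have h := perm_good hm σ _ (good_uk hm _
    (by simpa using Fintype.card_subtype_le (fun i : Fin (m - 1) => f i = true)))
  have he : f = fun i => decide (m - 1 ≤ (σ i).val + Fintype.card {i : Fin (m - 1) // f i = true}) := by
    funext i
    exact hσ i
  rw [he]
  exact h

noncomputable def zf (f : Fin (m - 1) → Bool) : List (Fin 4) := (allGood hm f).choose

lemma zf1 (f : Fin (m - 1) → Bool) :
    ∀ i, ((MM m hm).evalFrom (emb m i) (zf hm f) = lastS m hm ↔ f i = true) :=
  ((allGood hm f).choose_spec).1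

lemma zf2 (f : Fin (m - 1) → Bool) :
    ∀ s ∈ (zf hm f).tails, (MM m hm).evalFrom ⟨0, by omega⟩ s ≠ lastS m hm :=
  ((allGood hm f).choose_spec).2

lemma memL_iff (w : List (Fin 4)) (NN : DFA (Fin 4) (Fin 1))
    (hNN : ∀ v : List (Fin 4), v ∈ NN.accepts) :
    w ∈ revLang (MM m hm).accepts * NN.accepts ↔
      ∃ p t, p ++ t = w ∧ (MM m hm).evalFrom ⟨0, by omega⟩ p.reverse = lastS m hm := by
  rw [Language.mem_mul]
  constructor
  · rintro ⟨a, ha, b, hb, rfl⟩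
    refine ⟨a, b, rfl, ?_⟩
    have h2 : a.reverse ∈ (MM m hm).accepts := ha
    rw [DFA.mem_accepts] at h2
    exact Set.mem_singleton_iff.1 h2
  · rintro ⟨p, t, rfl, hp⟩
    refine ⟨p, ?_, t, hNN t, rfl⟩
    show p.reverse ∈ (MM m hm).accepts
    rw [DFA.mem_accepts]
    exact Set.mem_singleton_iff.2 hp

lemma suffix_split {α : Type} {s a b : List α} (h : s <:+ a ++ b) :
    s <:+ b ∨ ∃ s', s = s' ++ b ∧ s' <:+ a := by
  obtain ⟨t, ht⟩ := h
  rcases List.append_eq_append_iff.1 ht with ⟨a', h1, h2⟩ | ⟨c', h1, h2⟩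
  · exact Or.inr ⟨a', h2, ⟨t, h1.symm⟩⟩
  · exact Or.inl ⟨c', h2.symm⟩

lemma rep_of_suffix {s : List (Fin 4)} {k : ℕ} (h : s <:+ List.replicate k (3:Fin 4)) :
    s = List.replicate s.length 3 :=
  List.eq_replicate_of_mem (fun b hb => List.eq_of_mem_replicate (h.subset hb))

lemma evalFrom_rep_d (k : ℕ) : ∀ (j : Fin (m - 1)) (hjk : j.val + k < m - 1),
    (MM m hm).evalFrom (emb m j) (List.replicate k 3) = emb m ⟨j.val + k, by omega⟩ := by
  induction k with
  | zero =>
    intro j hj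
    simp only [List.replicate, DFA.evalFrom, List.foldl_nil]
    apply congrArg
    apply Fin.ext
    show j.val = j.val + 0
    omega
  | succ k ih =>
    intro j hj
    have hjlt := j.isLt
    rw [List.replicate_succ, evalFrom_cons, stepMM,
      step_d hm _ (by rw [emb_val]; omega) (by rw [emb_val]; omega)]
    have he : (⟨(emb m j).val + 1, by rw [emb_val]; omega⟩ : Fin m)
        = emb m ⟨j.val + 1, by omega⟩ := rfl
    rw [he, ih ⟨j.val + 1, by omega⟩ (by rw [Fin.val_mk]; omega)]
    apply congrArg
    apply Fin.ext
    show j.val + 1 + k = j.val + (k + 1)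
    omega

lemma evalFrom_zero_rep_d (k : ℕ) :
    (MM m hm).evalFrom ⟨0, by omega⟩ (List.replicate k 3) = ⟨0, by omega⟩ := by
  induction k with
  | zero => rfl
  | succ k ih => rw [List.replicate_succ, evalFrom_cons, stepMM, step_d_zero hm _ rfl, ih]

lemma evalFrom_rep_a (k : ℕ) : ∀ (j : ℕ) (hj : j + k ≤ m - 1),
    (MM m hm).evalFrom ⟨j, by omega⟩ (List.replicate k 0) = ⟨j + k, by omega⟩ := by
  induction k with
  | zero =>
    intro j hj
    simp only [List.replicate, DFA.evalFrom, List.foldl_nil]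
    apply Fin.ext
    rw [Fin.val_mk, Fin.val_mk]
    omega
  | succ k ih =>
    intro j hj
    rw [List.replicate_succ, evalFrom_cons, stepMM, step_a hm]
    have he : (⟨((⟨j, by omega⟩ : Fin m).val + 1) % m, Nat.mod_lt _ (by omega)⟩ : Fin m)
        = ⟨j + 1, by omega⟩ := by
      apply Fin.ext
      rw [Fin.val_mk, Fin.val_mk, Fin.val_mk, Nat.mod_eq_of_lt (by omega)]
    rw [he, ih (j + 1) (by omega)]
    apply Fin.ext
    rw [Fin.val_mk, Fin.val_mk]
    omega

lemma eval_ext (f : Fin (m - 1) → Bool) (i : Fin (m - 1)) :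
    ((MM m hm).evalFrom ⟨0, by omega⟩ ((0 :: List.replicate i.val 3) ++ zf hm f) = lastS m hm)
      ↔ f i = true := by
  rw [List.cons_append, evalFrom_cons, stepMM]
  have h0 : mstep m hm ⟨0, by omega⟩ 0 = emb m ⟨0, by omega⟩ := by
    rw [step_a hm]
    apply Fin.ext
    rw [Fin.val_mk, emb_val, Fin.val_mk, Nat.mod_eq_of_lt (by omega)]
  rw [h0, DFA.evalFrom_of_append, evalFrom_rep_d hm i.val ⟨0, by omega⟩
    (by have := i.isLt; rw [Fin.val_mk]; omega)]
  have he : (⟨(⟨0, by omega⟩ : Fin (m - 1)).val + i.val, by have := i.isLt; rw [Fin.val_mk]; omega⟩ : Fin (m - 1)) = i := by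
    apply Fin.ext
    rw [Fin.val_mk, Fin.val_mk]
    omega
  rw [he, zf1 hm f i]

lemma rev_ext_eq (f : Fin (m - 1) → Bool) (i : Fin (m - 1)) :
    ((zf hm f).reverse ++ (List.replicate i.val 3 ++ [(0:Fin 4)])).reverse
      = (0 :: List.replicate i.val 3) ++ zf hm f := by
  rw [List.reverse_append, List.reverse_append, List.reverse_reverse, List.reverse_replicate]
  rfl

lemma mem_ext (NN : DFA (Fin 4) (Fin 1)) (hNN : ∀ v : List (Fin 4), v ∈ NN.accepts)
    (f : Fin (m - 1) → Bool) (i : Fin (m - 1)) (hfi : f i = true) :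
    (zf hm f).reverse ++ (List.replicate i.val 3 ++ [(0:Fin 4)])
      ∈ revLang (MM m hm).accepts * NN.accepts := by
  rw [memL_iff hm _ NN hNN]
  refine ⟨_, [], List.append_nil _, ?_⟩
  rw [rev_ext_eq hm f i, eval_ext hm f i]
  exact hfi

lemma not_mem_ext (NN : DFA (Fin 4) (Fin 1)) (hNN : ∀ v : List (Fin 4), v ∈ NN.accepts)
    (f : Fin (m - 1) → Bool) (i : Fin (m - 1)) (hfi : f i = false) :
    (zf hm f).reverse ++ (List.replicate i.val 3 ++ [(0:Fin 4)])
      ∉ revLang (MM m hm).accepts * NN.accepts := by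
  rw [memL_iff hm _ NN hNN]
  rintro ⟨p, t, hpt, hp⟩
  have hsuf : p.reverse <:+ (0 :: List.replicate i.val 3) ++ zf hm f := by
    have h := congrArg List.reverse hpt
    rw [List.reverse_append, rev_ext_eq hm f i] at h
    exact ⟨t.reverse, h⟩
  rcases suffix_split hsuf with h | ⟨s', hs1, hs2⟩
  · exact zf2 hm f p.reverse ((List.mem_tails _ _).2 h) hp
  · rcases List.suffix_cons_iff.1 hs2 with rfl | hs3
    · rw [hs1, eval_ext hm f i] at hp
      rw [hp] at hfi
      cases hfi
    · have hrep := rep_of_suffix hs3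
      rw [hs1, hrep, DFA.evalFrom_of_append, evalFrom_zero_rep_d hm] at hp
      exact zf2 hm f (zf hm f) ((List.mem_tails _ _).2 (List.suffix_refl _)) hp

lemma not_mem_plain (NN : DFA (Fin 4) (Fin 1)) (hNN : ∀ v : List (Fin 4), v ∈ NN.accepts)
    (f : Fin (m - 1) → Bool) :
    (zf hm f).reverse ∉ revLang (MM m hm).accepts * NN.accepts := by
  rw [memL_iff hm _ NN hNN]
  rintro ⟨p, t, hpt, hp⟩
  have hsuf : p.reverse <:+ zf hm f := by
    have h := congrArg List.reverse hpt
    rw [List.reverse_append, List.reverse_reverse] at h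
    exact ⟨t.reverse, h⟩
  exact zf2 hm f p.reverse ((List.mem_tails _ _).2 hsuf) hp

lemma mem_w0 (NN : DFA (Fin 4) (Fin 1)) (hNN : ∀ v : List (Fin 4), v ∈ NN.accepts) :
    (List.replicate (m - 1) (0:Fin 4)) ∈ revLang (MM m hm).accepts * NN.accepts := by
  rw [memL_iff hm _ NN hNN]
  refine ⟨_, [], List.append_nil _, ?_⟩
  rw [List.reverse_replicate, evalFrom_rep_a hm (m - 1) 0 (by omega)]
  apply Fin.ext
  rw [Fin.val_mk]
  show 0 + (m - 1) = m - 1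
  omega

def NN : DFA (Fin 4) (Fin 1) := ⟨fun _ _ => 0, 0, Set.univ⟩

lemma NN_accepts (w : List (Fin 4)) : w ∈ NN.accepts := Set.mem_univ _

end Revcat

/-- For m ≥ 4, there is an m-state DFA M over {a,b,c,d} and a 1-state DFA N accepting Σ*
    such that every DFA accepting L(M)^R·L(N) = L(M)^R·Σ* needs at least 2^(m-1)+1 states. -/
theorem revcat_n_eq_one_lower (m : ℕ) (hm : 4 ≤ m) :
    ∃ (M : DFA (Fin 4) (Fin m)) (N : DFA (Fin 4) (Fin 1)),
      (∀ w : List (Fin 4), w ∈ N.accepts) ∧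
      ∀ (σ : Type) (inst : Fintype σ) (C : DFA (Fin 4) σ),
        C.accepts = revLang M.accepts * N.accepts →
        2 ^ (m - 1) + 1 ≤ @Fintype.card σ inst := by
  classical
  refine ⟨Revcat.MM m hm, Revcat.NN, fun w => Revcat.NN_accepts w, ?_⟩
  intro σ inst C hC
  have hNN := Revcat.NN_accepts
  have evalext : ∀ w1 w2 : List (Fin 4), C.eval w1 = C.eval w2 →
      ∀ t, ((w1 ++ t ∈ C.accepts) ↔ (w2 ++ t ∈ C.accepts)) := by
    intro w1 w2 h t
    rw [DFA.mem_accepts, DFA.mem_accepts]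
    show C.evalFrom C.start (w1 ++ t) ∈ _ ↔ C.evalFrom C.start (w2 ++ t) ∈ _
    rw [DFA.evalFrom_of_append, DFA.evalFrom_of_append]
    show C.evalFrom (C.eval w1) t ∈ _ ↔ C.evalFrom (C.eval w2) t ∈ _
    rw [h]
  have key : ∀ f g : Fin (m - 1) → Bool,
      C.eval (Revcat.zf hm f).reverse = C.eval (Revcat.zf hm g).reverse →
      ∀ i, f i = true → g i = true := by
    intro f g h i hfi
    by_contra hgi
    rw [Bool.not_eq_true] at hgi
    have h1 : (Revcat.zf hm f).reverse ++ (List.replicate i.val 3 ++ [(0:Fin 4)]) ∈ C.accepts := by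
      rw [hC]
      exact Revcat.mem_ext hm Revcat.NN hNN f i hfi
    rw [evalext _ _ h] at h1
    rw [hC] at h1
    exact Revcat.not_mem_ext hm Revcat.NN hNN g i hgi h1
  let Φ : ((Fin (m - 1) → Bool) ⊕ Unit) → σ :=
    Sum.elim (fun f => C.eval (Revcat.zf hm f).reverse)
      (fun _ => C.eval (List.replicate (m - 1) (0:Fin 4)))
  have hinj : Function.Injective Φ := by
    intro x y hxy
    cases x with
    | inl f =>
      cases y with
      | inl g =>
        have h : C.eval (Revcat.zf hm f).reverse = C.eval (Revcat.zf hm g).reverse := hxy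
        have hfg : f = g := by
          funext i
          cases hfi : f i with
          | false =>
            cases hgi : g i with
            | false => rfl
            | true =>
              have h2 := key g f h.symm i hgi
              rw [hfi] at h2
              cases h2
          | true =>
            rw [key f g h i hfi]
        rw [hfg]
      | inr u =>
        exfalso
        have h : C.eval (Revcat.zf hm f).reverse
            = C.eval (List.replicate (m - 1) (0:Fin 4)) := hxy
        have h1 : List.replicate (m - 1) (0:Fin 4) ∈ C.accepts := by
          rw [hC]
          exact Revcat.mem_w0 hm Revcat.NN hNN
        have h2 := (evalext _ _ h []).2
        rw [List.append_nil, List.append_nil] at h2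
        have h3 := h2 h1
        rw [hC] at h3
        exact Revcat.not_mem_plain hm Revcat.NN hNN f h3
    | inr u =>
      cases y with
      | inl g =>
        exfalso
        have h : C.eval (Revcat.zf hm g).reverse
            = C.eval (List.replicate (m - 1) (0:Fin 4)) := hxy.symm
        have h1 : List.replicate (m - 1) (0:Fin 4) ∈ C.accepts := by
          rw [hC]
          exact Revcat.mem_w0 hm Revcat.NN hNN
        have h2 := (evalext _ _ h []).2
        rw [List.append_nil, List.append_nil] at h2
        have h3 := h2 h1
        rw [hC] at h3
        exact Revcat.not_mem_plain hm Revcat.NN hNN g h3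
      | inr u' => cases u; cases u'; rfl
  have hcard := @Fintype.card_le_of_injective _ _ _ inst Φ hinj
  have hc2 : Fintype.card ((Fin (m - 1) → Bool) ⊕ Unit) = 2 ^ (m - 1) + 1 := by
    simp [Fintype.card_sum, Fintype.card_fun]
  rw [hc2] at hcard
  exact hcard
end

section
/- For integers m ≥ 1 and n ≥ 2, let A be a complete DFA with m states whose unique final state equals its initial state, and let B be a complete DFA with n states. Then there exists a complete DFA with at most m·(2^n − 1) − 2^(n−1) + 1 states accepting L(A)·L(B), which equals L(A)*·L(B). -/
open Computability

/-!
Run `A` alongside the subset construction for `B`, starting a fresh copy of `B` each time `A`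
accepts: after reading `x` the state is `(A.eval x, {B.eval z | y ++ z = x, y ∈ L(A)})`. When `A`
accepts the empty word, every reachable set `T` is nonempty and contains `B.start` whenever the
first component is final, which leaves `|F|·2^(n-1) + (m - |F|)·(2^n - 1)` states; here `F` is
`{A.start}`. Finally, a word of `L(A)` leads `A` back to its start state, so `L(A)` is a submonoid
and `L(A)* = L(A)`.
-/

theorem List.append_eq_append_singleton_iff {α : Type*} {y z x : List α} {a : α} :
    y ++ z = x ++ [a] ↔ (y = x ++ [a] ∧ z = []) ∨ ∃ z', y ++ z' = x ∧ z = z' ++ [a] := by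
  rcases List.eq_nil_or_concat z with rfl | ⟨z', b, rfl⟩
  · simp
  · rw [List.concat_eq_append, ← List.append_assoc, List.append_singleton_inj]
    constructor
    · rintro ⟨rfl, rfl⟩
      exact .inr ⟨z', rfl, rfl⟩
    · rintro (⟨-, h⟩ | ⟨z'', rfl, h⟩)
      · simp at h
      · obtain ⟨rfl, rfl⟩ := List.append_singleton_inj.1 h
        exact ⟨rfl, rfl⟩

theorem natCard_subtype_set_mem {σ : Type*} [Fintype σ] (a : σ) :
    Nat.card {T : Set σ // a ∈ T} = 2 ^ (Fintype.card σ - 1) := by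
  classical
  let e : {T : Set σ // a ∈ T} ≃ Set {x // x ≠ a} :=
    { toFun T := Subtype.val ⁻¹' T
      invFun S := ⟨insert a (Subtype.val '' S), Set.mem_insert a _⟩
      left_inv T := by
        ext x
        by_cases hx : x = a
        · simp [hx, T.2]
        · simp [hx]
      right_inv S := by
        ext x
        simp [x.2] }
  rw [Nat.card_congr e, Nat.card_eq_fintype_card, Fintype.card_set, Fintype.card_subtype_compl,
    Fintype.card_subtype_eq]

theorem natCard_subtype_set_nonempty {σ : Type*} [Fintype σ] :
    Nat.card {T : Set σ // T.Nonempty} = 2 ^ Fintype.card σ - 1 := by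
  classical
  rw [Nat.card_congr (Equiv.subtypeEquivRight fun T => Set.nonempty_iff_ne_empty),
    Nat.card_eq_fintype_card, Fintype.card_subtype_compl, Fintype.card_subtype_eq,
    Fintype.card_set]

namespace DFA

variable {α σ σ₁ σ₂ : Type*}

theorem accepts_kstar_of_accept_eq_singleton_start {M : DFA α σ}
    (hF : M.accept = {M.start}) : M.accepts∗ = M.accepts := by
  have nil_mem : [] ∈ M.accepts := by simp [mem_accepts, hF]
  have append_mem {x y : List α} (hx : x ∈ M.accepts) (hy : y ∈ M.accepts) :
      x ++ y ∈ M.accepts := by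
    simp only [mem_accepts, hF, Set.mem_singleton_iff, eval] at hx hy ⊢
    rw [evalFrom_of_append, hx, hy]
  have one_le : 1 ≤ M.accepts := by
    rw [Language.one_def]
    exact Set.singleton_subset_iff.2 nil_mem
  refine kstar_eq_self.2 ⟨le_antisymm ?_ (le_mul_of_one_le_left' one_le), one_le⟩
  rintro _ ⟨x, hx, y, hy, rfl⟩
  exact append_mem hx hy

def restrict (M : DFA α σ) (S : Set σ) (hstart : M.start ∈ S)
    (hstep : ∀ s ∈ S, ∀ a, M.step s a ∈ S) : DFA α S where
  step s a := ⟨M.step s a, hstep s s.2 a⟩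
  start := ⟨M.start, hstart⟩
  accept := Subtype.val ⁻¹' M.accept

theorem coe_eval_restrict (M : DFA α σ) (S : Set σ) (hstart : M.start ∈ S)
    (hstep : ∀ s ∈ S, ∀ a, M.step s a ∈ S) (x : List α) :
    ((M.restrict S hstart hstep).eval x : σ) = M.eval x := by
  induction x using List.reverseRecOn with
  | nil => rfl
  | append_singleton x a ih => simp only [eval_append_singleton, ← ih]; rfl

theorem accepts_restrict (M : DFA α σ) (S : Set σ) (hstart : M.start ∈ S)
    (hstep : ∀ s ∈ S, ∀ a, M.step s a ∈ S) : (M.restrict S hstart hstep).accepts = M.accepts := by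
  ext x
  simp only [mem_accepts, ← coe_eval_restrict M S hstart hstep]
  rfl

def catenation (A : DFA α σ₁) (B : DFA α σ₂) : DFA α (σ₁ × Set σ₂) where
  step p a := (A.step p.1 a,
    {t | (∃ s ∈ p.2, B.step s a = t) ∨ (A.step p.1 a ∈ A.accept ∧ t = B.start)})
  start := (A.start, {t | A.start ∈ A.accept ∧ t = B.start})
  accept := {p | ∃ t ∈ p.2, t ∈ B.accept}

theorem eval_catenation (A : DFA α σ₁) (B : DFA α σ₂) (x : List α) :
    (A.catenation B).eval x =
      (A.eval x, {t | ∃ y z, y ++ z = x ∧ y ∈ A.accepts ∧ B.eval z = t}) := by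
  induction x using List.reverseRecOn with
  | nil => ext <;> simp [catenation, mem_accepts, eq_comm]
  | append_singleton x a ih =>
    rw [eval_append_singleton, ih]
    ext t
    · simp [catenation]
    · simp only [catenation, Set.mem_ofPred_eq, List.append_eq_append_singleton_iff]
      constructor
      · rintro (⟨s, ⟨y, z, rfl, hy, rfl⟩, rfl⟩ | ⟨hx, rfl⟩)
        · exact ⟨y, z ++ [a], .inr ⟨z, rfl, rfl⟩, hy, eval_append_singleton ..⟩
        · exact ⟨x ++ [a], [], .inl ⟨rfl, rfl⟩, by rwa [mem_accepts, eval_append_singleton], rfl⟩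
      · rintro ⟨y, z, ⟨rfl, rfl⟩ | ⟨z, rfl, rfl⟩, hy, rfl⟩
        · exact .inr ⟨by rwa [mem_accepts, eval_append_singleton] at hy, rfl⟩
        · exact .inl ⟨B.eval z, ⟨y, z, rfl, hy, rfl⟩, (eval_append_singleton ..).symm⟩

theorem accepts_catenation (A : DFA α σ₁) (B : DFA α σ₂) :
    (A.catenation B).accepts = A.accepts * B.accepts := by
  ext x
  simp only [mem_accepts, eval_catenation, Language.mem_mul]
  constructor
  · rintro ⟨t, ⟨y, z, rfl, hy, rfl⟩, hz⟩
    exact ⟨y, hy, z, hz, rfl⟩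
  · rintro ⟨y, hy, z, hz, rfl⟩
    exact ⟨B.eval z, ⟨y, z, rfl, hy, rfl⟩, hz⟩

def catenationStates (A : DFA α σ₁) (B : DFA α σ₂) : Set (σ₁ × Set σ₂) :=
  {p | p.2.Nonempty ∧ (p.1 ∈ A.accept → B.start ∈ p.2)}

theorem catenation_start_mem_catenationStates {A : DFA α σ₁} (hA : A.start ∈ A.accept)
    (B : DFA α σ₂) : (A.catenation B).start ∈ A.catenationStates B :=
  ⟨⟨B.start, hA, rfl⟩, fun _ => ⟨hA, rfl⟩⟩

theorem catenation_step_mem_catenationStates (A : DFA α σ₁) (B : DFA α σ₂) :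
    ∀ p ∈ A.catenationStates B, ∀ a, (A.catenation B).step p a ∈ A.catenationStates B := by
  rintro p ⟨⟨s, hs⟩, -⟩ a
  exact ⟨⟨B.step s a, .inl ⟨s, hs, rfl⟩⟩, fun h => .inr ⟨h, rfl⟩⟩

theorem natCard_catenationStates [Fintype σ₁] [Fintype σ₂] (A : DFA α σ₁) (B : DFA α σ₂) :
    Nat.card (A.catenationStates B) = Nat.card A.accept * 2 ^ (Fintype.card σ₂ - 1) +
      Nat.card ↥A.acceptᶜ * (2 ^ Fintype.card σ₂ - 1) := by
  classical
  have fiber (q : σ₁) : Nat.card {T : Set σ₂ // T.Nonempty ∧ (q ∈ A.accept → B.start ∈ T)} =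
      if q ∈ A.accept then 2 ^ (Fintype.card σ₂ - 1) else 2 ^ Fintype.card σ₂ - 1 := by
    split_ifs with hq
    · rw [← natCard_subtype_set_mem B.start]
      exact Nat.card_congr (Equiv.subtypeEquivRight fun T => by
        simpa [hq] using fun h => ⟨_, h⟩)
    · rw [← natCard_subtype_set_nonempty]
      exact Nat.card_congr (Equiv.subtypeEquivRight fun T => by simp [hq])
  refine (Nat.card_congr (Equiv.subtypeProdEquivSigmaSubtype
    fun q (T : Set σ₂) => T.Nonempty ∧ (q ∈ A.accept → B.start ∈ T))).trans ?_
  simp_rw [Nat.card_sigma, fiber]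
  rw [← Fintype.sum_subtype_add_sum_subtype (· ∈ A.accept),
    Finset.sum_congr rfl fun q _ => if_pos q.2, Finset.sum_congr rfl fun q _ => if_neg q.2]
  simp only [Finset.sum_const, Finset.card_univ, smul_eq_mul, Nat.card_eq_fintype_card]
  rfl

end DFA

theorem starcat_upper_special_general
    (m n : ℕ)
    (α σ₁ σ₂ : Type) [Fintype σ₁] [Fintype σ₂]
    (A : DFA α σ₁) (B : DFA α σ₂)
    (hcm : Fintype.card σ₁ = m) (hcn : Fintype.card σ₂ = n)
    (hF : A.accept = {A.start}) :
    A.accepts * B.accepts = (A.accepts)∗ * B.accepts ∧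
    ∃ (σ : Type) (inst : Fintype σ) (C : DFA α σ),
      C.accepts = A.accepts * B.accepts ∧
      @Fintype.card σ inst ≤ m * (2 ^ n - 1) - 2 ^ (n - 1) + 1 := by
  have hA : A.start ∈ A.accept := hF ▸ rfl
  refine ⟨by rw [DFA.accepts_kstar_of_accept_eq_singleton_start hF], A.catenationStates B,
    Fintype.ofFinite _,
    (A.catenation B).restrict _ (DFA.catenation_start_mem_catenationStates hA B)
      (A.catenation_step_mem_catenationStates B),
    by rw [DFA.accepts_restrict, DFA.accepts_catenation], ?_⟩
  have hcard_start : Nat.card ({A.start} : Set σ₁) = 1 := by simp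
  have hcard_compl : Nat.card ↥({A.start} : Set σ₁)ᶜ = m - 1 := by
    rw [Nat.card_coe_set_eq, Set.ncard_compl, Set.ncard_singleton, Nat.card_eq_fintype_card, hcm]
  rw [Fintype.card_eq_nat_card, DFA.natCard_catenationStates, hF, hcard_start, hcard_compl, hcn]
  obtain ⟨m, rfl⟩ := Nat.exists_eq_add_one.2 (hcm ▸ Fintype.card_pos_iff.2 ⟨A.start⟩)
  obtain ⟨n, rfl⟩ := Nat.exists_eq_add_one.2 (hcn ▸ Fintype.card_pos_iff.2 ⟨B.start⟩)
  rw [Nat.add_sub_cancel, Nat.add_sub_cancel, pow_succ, add_one_mul]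
  have : 1 ≤ 2 ^ n := Nat.one_le_two_pow
  generalize 2 ^ n = X at *
  generalize m * (X * 2 - 1) = t
  omega

/-- Upper bound m·(2^n − 1) − 2^(n−1) + 1 for catenation when the first DFA's unique final
    state is its initial state (so that L(A)* = L(A)). -/
theorem starcat_upper_special
    (m n : ℕ) (hm : 1 ≤ m) (hn : 2 ≤ n)
    (α σ₁ σ₂ : Type) [Fintype σ₁] [Fintype σ₂]
    (A : DFA α σ₁) (B : DFA α σ₂)
    (hcm : Fintype.card σ₁ = m) (hcn : Fintype.card σ₂ = n)
    (hF : A.accept = {A.start}) :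
    A.accepts * B.accepts = (A.accepts)∗ * B.accepts ∧
    ∃ (σ : Type) (inst : Fintype σ) (C : DFA α σ),
      C.accepts = A.accepts * B.accepts ∧
      @Fintype.card σ inst ≤ m * (2 ^ n - 1) - 2 ^ (n - 1) + 1 :=
  starcat_upper_special_general m n α σ₁ σ₂ A B hcm hcn hF
end

section
/- For all integers m ≥ 2 and n ≥ 2, there exist a complete DFA A with m states over the alphabet {a,b,c}, whose unique final state is its initial state, and a complete DFA B with n states, such that every complete DFA accepting L(A)·L(B) = L(A)*·L(B) has at least m·(2^n − 1) − 2^(n−1) + 1 states. -/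
/-!
The subset construction for `L(A) · L(B)` runs `A` together with the set `S` of states of `B`
reached from the split points read so far. For these witnesses every state `(i, S)` with `S ≠ ∅`
and `0 ∈ S` when `i = 0` is reachable: `b` rotates `S` while `i ≠ 0` and `a^m` adds `0` to it,
which builds every set one element at a time. There are `(m - 1)(2^n - 1) + 2^(n-1)` such states
and they are pairwise distinguishable: `b^(n-1-s)` is accepted from `(i, S)` iff `s ∈ S`, and
two states that differ only in `i` are told apart after `c^(n-1)`, which collapses every set to
`{0}`. By Myhill–Nerode any DFA for the language has at least that many states. Finally
`L(A)∗ = L(A)` because the only final state of `A` is its initial state.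
-/

open Computability

namespace DFA

variable {α σ τ : Type*}

theorem evalFrom_replicate (M : DFA α σ) (s : σ) (a : α) (k : ℕ) :
    M.evalFrom s (List.replicate k a) = (M.step · a)^[k] s := by
  induction k generalizing s with
  | zero => rfl
  | succ k ih => rw [List.replicate_succ, evalFrom_cons, ih, Function.iterate_succ_apply]

theorem acceptsFrom_evalFrom (M : DFA α σ) (s : σ) (x : List α) :
    M.acceptsFrom (M.evalFrom s x) = (M.acceptsFrom s).leftQuotient x := by
  ext y
  rw [Language.mem_leftQuotient, mem_acceptsFrom, mem_acceptsFrom, evalFrom_of_append]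

def IsReachable (M : DFA α σ) (s : σ) : Prop := ∃ x, M.eval x = s

theorem IsReachable.evalFrom {M : DFA α σ} {s : σ} (h : M.IsReachable s) (x : List α) :
    M.IsReachable (M.evalFrom s x) :=
  let ⟨w, hw⟩ := h
  ⟨w ++ x, by rw [eval, evalFrom_of_append, ← eval, hw]⟩

theorem card_le_card_of_accepts_eq_s9 [Fintype σ] (D : DFA α τ) (C : DFA α σ)
    (hC : C.accepts = D.accepts) (R : Finset τ) (hreach : ∀ p ∈ R, D.IsReachable p)
    (hdist : Set.InjOn D.acceptsFrom R) : R.card ≤ Fintype.card σ := by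
  choose! word hword using hreach
  have hquot (w : List α) : D.acceptsFrom (D.eval w) = C.acceptsFrom (C.eval w) := by
    rw [← Language.leftQuotient_accepts_apply, ← Language.leftQuotient_accepts_apply, hC]
  refine Finset.card_le_card_of_injOn (fun p => C.eval (word p)) (by simp)
    fun p hp q hq hpq => hdist hp hq ?_
  rw [← hword p hp, ← hword q hq, hquot, hquot]
  exact congrArg C.acceptsFrom hpq

theorem kstar_accepts_of_accept_eq_singleton (M : DFA α σ) (h : M.accept = {M.start}) :
    M.accepts∗ = M.accepts := by
  have mem (x : List α) : x ∈ M.accepts ↔ M.eval x = M.start := by rw [mem_accepts, h]; rfl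
  refine le_antisymm (kstar_le_of_mul_le_left ?_ ?_) le_kstar
  · intro x hx
    rw [(Language.mem_one x).mp hx]
    exact (mem []).mpr rfl
  · intro x hx
    obtain ⟨u, hu, v, hv, rfl⟩ := Language.mem_mul.mp hx
    rw [mem] at hu hv
    refine (mem _).mpr ?_
    rwa [eval, evalFrom_of_append, ← eval, hu]

section Concat

variable [DecidableEq τ]

/-- The subset construction for `M.accepts * N.accepts`: the second component is the set of
states of `N` reached from the split points at which `M` accepted. -/
def concat (M : DFA α σ) [DecidablePred (· ∈ M.accept)] (N : DFA α τ) :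
    DFA α (σ × Finset τ) where
  step p a :=
    (M.step p.1 a, if M.step p.1 a ∈ M.accept then insert N.start (p.2.image (N.step · a))
      else p.2.image (N.step · a))
  start := (M.start, if M.start ∈ M.accept then {N.start} else ∅)
  accept := {p | ∃ t ∈ p.2, t ∈ N.accept}

variable (M : DFA α σ) [DecidablePred (· ∈ M.accept)] (N : DFA α τ)

theorem fst_evalFrom_concat (p : σ × Finset τ) (x : List α) :
    ((M.concat N).evalFrom p x).1 = M.evalFrom p.1 x := by
  induction x generalizing p with
  | nil => rfl
  | cons a x ih => exact ih _

theorem mem_snd_step_concat (p : σ × Finset τ) (a : α) (t : τ) :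
    t ∈ ((M.concat N).step p a).2 ↔
      (∃ s ∈ p.2, N.step s a = t) ∨ (M.step p.1 a ∈ M.accept ∧ N.start = t) := by
  simp only [concat]
  split_ifs with h <;> simp [h, eq_comm, or_comm]

theorem mem_snd_evalFrom_concat (p : σ × Finset τ) (x : List α) (t : τ) :
    t ∈ ((M.concat N).evalFrom p x).2 ↔
      (∃ s ∈ p.2, N.evalFrom s x = t) ∨
        ∃ u v, u ++ v = x ∧ u ≠ [] ∧ M.evalFrom p.1 u ∈ M.accept ∧
          N.evalFrom N.start v = t := by
  induction x generalizing p with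
  | nil => simp
  | cons a x ih =>
    rw [evalFrom_cons, ih]
    constructor
    · rintro (⟨s, hs, rfl⟩ | ⟨u, v, rfl, -, hu, rfl⟩)
      · rcases (mem_snd_step_concat M N p a s).mp hs with ⟨s₀, hs₀, rfl⟩ | ⟨hacc, rfl⟩
        · exact Or.inl ⟨s₀, hs₀, rfl⟩
        · exact Or.inr ⟨[a], _, rfl, List.cons_ne_nil _ _, hacc, rfl⟩
      · exact Or.inr ⟨a :: u, v, rfl, List.cons_ne_nil _ _, hu, rfl⟩
    · rintro (⟨s, hs, rfl⟩ | ⟨_ | ⟨b, u⟩, v, huv, hne, hu, rfl⟩)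
      · exact Or.inl ⟨_, (mem_snd_step_concat M N p a _).mpr (Or.inl ⟨s, hs, rfl⟩), rfl⟩
      · exact absurd rfl hne
      · obtain ⟨rfl, rfl⟩ := List.cons_eq_cons.mp huv
        rcases eq_or_ne u [] with rfl | hu'
        · exact Or.inl ⟨_, (mem_snd_step_concat M N p b _).mpr (Or.inr ⟨hu, rfl⟩), rfl⟩
        · exact Or.inr ⟨u, v, rfl, hu', hu, rfl⟩

theorem accepts_concat : (M.concat N).accepts = M.accepts * N.accepts := by
  have hstart (s : τ) : s ∈ (M.concat N).start.2 ↔ M.start ∈ M.accept ∧ s = N.start := by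
    simp only [concat]
    split_ifs with h <;> simp [h]
  ext w
  rw [Language.mem_mul]
  change (∃ t ∈ ((M.concat N).evalFrom (M.concat N).start w).2, t ∈ N.accept) ↔ _
  simp only [mem_snd_evalFrom_concat]
  constructor
  · rintro ⟨t, ⟨s, hs, rfl⟩ | ⟨u, v, rfl, -, hu, rfl⟩, ht⟩
    · obtain ⟨hM, rfl⟩ := (hstart s).mp hs
      exact ⟨[], hM, w, ht, rfl⟩
    · exact ⟨u, hu, v, ht, rfl⟩
  · rintro ⟨u, hu, v, hv, rfl⟩
    rcases eq_or_ne u [] with rfl | hne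
    · exact ⟨_, Or.inl ⟨N.start, (hstart _).mpr ⟨hu, rfl⟩, rfl⟩, hv⟩
    · exact ⟨_, Or.inr ⟨u, v, rfl, hne, hu, rfl⟩, hv⟩

theorem mem_snd_evalFrom_concat_replicate (p : σ × Finset τ) (a : α) (k : ℕ) (t : τ) :
    t ∈ ((M.concat N).evalFrom p (List.replicate k a)).2 ↔
      (∃ s ∈ p.2, (N.step · a)^[k] s = t) ∨
        ∃ r, 0 < r ∧ r ≤ k ∧ (M.step · a)^[r] p.1 ∈ M.accept ∧
          (N.step · a)^[k - r] N.start = t := by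
  rw [mem_snd_evalFrom_concat]
  refine or_congr (by simp only [evalFrom_replicate]) ⟨?_, ?_⟩
  · rintro ⟨u, v, huv, hne, hu, rfl⟩
    obtain ⟨hlen, hu', hv'⟩ := List.append_eq_replicate_iff.mp huv
    refine ⟨u.length, List.length_pos_iff.mpr hne, by omega, ?_, ?_⟩
    · rwa [hu', evalFrom_replicate] at hu
    · rw [hv', evalFrom_replicate, ← hlen, Nat.add_sub_cancel_left]
  · rintro ⟨r, hr, hrk, hu, rfl⟩
    refine ⟨List.replicate r a, List.replicate (k - r) a, ?_, ?_, ?_, ?_⟩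
    · rw [List.replicate_append_replicate, Nat.add_sub_cancel' hrk]
    · simpa using hr.ne'
    · rwa [evalFrom_replicate]
    · rw [evalFrom_replicate]

end Concat

end DFA

section FinArith

open Fin.CommRing

variable {m : ℕ} [NeZero m]

theorem Fin.add_natCast_eq_zero_iff (i : Fin m) (r : ℕ) : i + r = 0 ↔ m ∣ i.val + r := by
  rw [← Fin.natCast_eq_zero, Nat.cast_add, Fin.cast_val_eq_self]

theorem Fin.add_natCast_eq_neg_one_iff (i : Fin m) (r : ℕ) :
    i + r = -1 ↔ m ∣ i.val + (r + 1) := by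
  rw [eq_neg_iff_add_eq_zero, add_assoc, ← Nat.cast_succ, Fin.add_natCast_eq_zero_iff]

theorem Fin.val_one_of_one_lt (hm : 1 < m) : (1 : Fin m).val = 1 := by
  rw [Fin.val_one', Nat.mod_eq_of_lt hm]

end FinArith

open Finset in
theorem Finset.card_filter_mem_univ_finset {α : Type*} [Fintype α] [DecidableEq α] (a : α) :
    #{S : Finset α | a ∈ S} = 2 ^ (Fintype.card α - 1) := by
  have hnot : ({S : Finset α | a ∉ S} : Finset _) = (univ.erase a).powerset := by
    ext S
    simp [subset_erase]
  have hsum := card_filter_add_card_filter_not (s := univ) (a ∈ · : Finset α → Prop)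
  rw [hnot, card_powerset, card_erase_of_mem (mem_univ a), card_univ, card_univ,
    Fintype.card_finset] at hsum
  have hpos : 0 < Fintype.card α := Fintype.card_pos_iff.mpr ⟨a⟩
  have : 2 ^ Fintype.card α = 2 * 2 ^ (Fintype.card α - 1) := by
    rw [← pow_succ', Nat.sub_add_cancel hpos]
  omega

namespace StarConcat

open Fin.CommRing DFA List
open scoped Finset

variable (m n : ℕ) [NeZero m] [NeZero n]

/-- The letters `a, b, c` are `0, 1, 2 : Fin 3`. -/
def dfaA : DFA (Fin 3) (Fin m) where
  step i x := if x = 0 then i + 1 else i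
  start := 0
  accept := {0}

def cStep (s : Fin n) : Fin n := if s = 0 then 0 else s + 1

def dfaB : DFA (Fin 3) (Fin n) where
  step s x := if x = 0 then s else if x = 1 then s + 1 else cStep n s
  start := 0
  accept := {-1}

instance : DecidablePred (· ∈ (dfaA m).accept) := fun i => inferInstanceAs (Decidable (i = 0))

abbrev dfaAB : DFA (Fin 3) (Fin m × Finset (Fin n)) := (dfaA m).concat (dfaB n)

def reachableStates : Finset (Fin m × Finset (Fin n)) :=
  {0} ×ˢ Finset.univ.filter (0 ∈ ·) ∪ (Finset.univ.erase 0) ×ˢ (Finset.univ.erase ∅)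

variable {m n}

theorem mem_accept_dfaAB (p : Fin m × Finset (Fin n)) :
    p ∈ (dfaAB m n).accept ↔ -1 ∈ p.2 := by
  change (∃ t ∈ p.2, t = -1) ↔ _
  simp

theorem evalFrom_dfaA_replicate_a (i : Fin m) (k : ℕ) :
    (dfaA m).evalFrom i (replicate k 0) = i + k := by
  rw [evalFrom_replicate]
  exact (add_right_iterate_apply 1 i).trans (by rw [nsmul_one])

theorem evalFrom_dfaA_replicate_of_ne_zero (i : Fin m) {x : Fin 3} (hx : x ≠ 0) (k : ℕ) :
    (dfaA m).evalFrom i (replicate k x) = i := by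
  rw [evalFrom_replicate, show (fun j => (dfaA m).step j x) = id from funext fun _ => if_neg hx,
    Function.iterate_id, id]

theorem mem_snd_evalFrom_replicate_a (i : Fin m) (S : Finset (Fin n)) (k : ℕ) (t : Fin n) :
    t ∈ ((dfaAB m n).evalFrom (i, S) (replicate k 0)).2 ↔
      t ∈ S ∨ ∃ r, 0 < r ∧ r ≤ k ∧ m ∣ i.val + r ∧ t = 0 := by
  rw [mem_snd_evalFrom_concat_replicate]
  change (∃ s ∈ S, id^[k] s = t) ∨
    (∃ r, 0 < r ∧ r ≤ k ∧ (· + 1)^[r] i ∈ ({0} : Set (Fin m)) ∧ id^[k - r] 0 = t) ↔ _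
  simp only [Function.iterate_id, id, add_right_iterate_apply, nsmul_one, Set.mem_singleton_iff,
    Fin.add_natCast_eq_zero_iff, exists_eq_right, eq_comm (a := (0 : Fin n))]

theorem evalFrom_replicate_a_of_lt (i : Fin m) (S : Finset (Fin n)) (k : ℕ)
    (h : i.val + k < m) : (dfaAB m n).evalFrom (i, S) (replicate k 0) = (i + k, S) := by
  refine Prod.ext (by rw [fst_evalFrom_concat, evalFrom_dfaA_replicate_a]) (Finset.ext fun t => ?_)
  rw [mem_snd_evalFrom_replicate_a, or_iff_left]
  rintro ⟨r, hr, hrk, hdvd, -⟩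
  have := Nat.eq_zero_of_dvd_of_lt hdvd (by omega)
  omega

theorem evalFrom_replicate_a_of_eq (i : Fin m) (S : Finset (Fin n)) (k : ℕ)
    (h : i.val + k = m) : (dfaAB m n).evalFrom (i, S) (replicate k 0) = (0, insert 0 S) := by
  refine Prod.ext ?_ (Finset.ext fun t => ?_)
  · rw [fst_evalFrom_concat, evalFrom_dfaA_replicate_a, Fin.add_natCast_eq_zero_iff, h]
  · rw [mem_snd_evalFrom_replicate_a, Finset.mem_insert, or_comm]
    refine or_congr_left
      ⟨fun ⟨_, _, _, _, ht⟩ => ht, fun ht => ⟨k, ?_, le_rfl, by rw [h], ht⟩⟩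
    have := i.isLt
    omega

theorem evalFrom_replicate_a_singleton_zero (i : Fin m) (k : ℕ) :
    (dfaAB m n).evalFrom (i, {0}) (replicate k 0) = (i + k, {0}) := by
  refine Prod.ext (by rw [fst_evalFrom_concat, evalFrom_dfaA_replicate_a]) (Finset.ext fun t => ?_)
  rw [mem_snd_evalFrom_replicate_a, Finset.mem_singleton]
  exact or_iff_left_of_imp fun ⟨_, _, _, _, ht⟩ => ht

theorem mem_snd_evalFrom_replicate_b (i : Fin m) (S : Finset (Fin n)) (k : ℕ) (t : Fin n) :
    t ∈ ((dfaAB m n).evalFrom (i, S) (replicate k 1)).2 ↔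
      (∃ s ∈ S, s + k = t) ∨
        ∃ r, 0 < r ∧ r ≤ k ∧ i = 0 ∧ ((k - r : ℕ) : Fin n) = t := by
  rw [mem_snd_evalFrom_concat_replicate]
  change (∃ s ∈ S, (· + 1)^[k] s = t) ∨
    (∃ r, 0 < r ∧ r ≤ k ∧ id^[r] i ∈ ({0} : Set (Fin m)) ∧ (· + 1)^[k - r] 0 = t) ↔ _
  simp only [Function.iterate_id, id, add_right_iterate_apply, nsmul_one, Set.mem_singleton_iff,
    zero_add]

theorem evalFrom_replicate_b_of_ne_zero (i : Fin m) (hi : i ≠ 0) (S : Finset (Fin n)) (k : ℕ) :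
    (dfaAB m n).evalFrom (i, S) (replicate k 1) = (i, S.image (· + (k : Fin n))) := by
  refine Prod.ext ?_ (Finset.ext fun t => ?_)
  · rw [fst_evalFrom_concat, evalFrom_dfaA_replicate_of_ne_zero _ (by decide)]
  · rw [mem_snd_evalFrom_replicate_b, Finset.mem_image]
    simp [hi]

theorem replicate_b_mem_acceptsFrom_iff (i : Fin m) (S : Finset (Fin n)) (s : Fin n) :
    replicate (n - 1 - s.val) 1 ∈ (dfaAB m n).acceptsFrom (i, S) ↔ s ∈ S := by
  have hs : s + ((n - 1 - s.val : ℕ) : Fin n) = -1 := by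
    rw [Fin.add_natCast_eq_neg_one_iff, show s.val + (n - 1 - s.val + 1) = n by omega]
  rw [mem_acceptsFrom, mem_accept_dfaAB, mem_snd_evalFrom_replicate_b, or_iff_left]
  · simp only [← hs, add_left_inj, exists_eq_right]
  · rintro ⟨r, hr, hrk, -, h⟩
    rw [← zero_add ((n - 1 - s.val - r : ℕ) : Fin n), Fin.add_natCast_eq_neg_one_iff,
      Fin.val_zero, zero_add] at h
    have := Nat.le_of_dvd (by omega) h
    omega

theorem cStep_zero : cStep n 0 = 0 := if_pos rfl

theorem cStep_iterate_zero (k : ℕ) : (cStep n)^[k] 0 = 0 :=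
  Function.iterate_fixed cStep_zero k

theorem cStep_iterate_eq_zero_or (s : Fin n) (hs : s ≠ 0) (k : ℕ) :
    (cStep n)^[k] s = 0 ∨ ((cStep n)^[k] s).val = s.val + k := by
  induction k with
  | zero => exact Or.inr rfl
  | succ k ih =>
    rw [Function.iterate_succ_apply']
    rcases ih with h | h
    · exact Or.inl (by rw [h, cStep_zero])
    · set x := (cStep n)^[k] s
      have hx : x ≠ 0 := by
        rintro hx
        rw [hx, Fin.val_zero] at h
        exact hs (Fin.ext (by rw [Fin.val_zero]; omega))
      rw [show cStep n x = x + 1 from if_neg hx]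
      by_cases hlt : x.val + 1 < n
      · exact Or.inr (by rw [Fin.val_add_one_of_lt' hlt, h]; rfl)
      · refine Or.inl ?_
        rw [← Nat.cast_one, Fin.add_natCast_eq_zero_iff, show x.val + 1 = n by omega]

theorem cStep_iterate_pred (s : Fin n) : (cStep n)^[n - 1] s = 0 := by
  by_cases hs : s = 0
  · rw [hs, cStep_iterate_zero]
  · refine (cStep_iterate_eq_zero_or s hs (n - 1)).resolve_right fun h => ?_
    have := ((cStep n)^[n - 1] s).isLt
    have : s.val ≠ 0 := fun h => hs (Fin.ext h)
    omega

theorem evalFrom_replicate_c_of_nonempty (i : Fin m) {S : Finset (Fin n)} (hS : S.Nonempty) :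
    (dfaAB m n).evalFrom (i, S) (replicate (n - 1) 2) = (i, {0}) := by
  refine Prod.ext ?_ (Finset.ext fun t => ?_)
  · rw [fst_evalFrom_concat, evalFrom_dfaA_replicate_of_ne_zero _ (by decide)]
  rw [mem_snd_evalFrom_concat_replicate]
  change (∃ s ∈ S, (cStep n)^[n - 1] s = t) ∨
    (∃ r, 0 < r ∧ r ≤ n - 1 ∧ _ ∧ (cStep n)^[n - 1 - r] 0 = t) ↔ _
  simp only [cStep_iterate_pred, cStep_iterate_zero, Finset.mem_singleton]
  refine ⟨fun h => ?_, fun ht => Or.inl (hS.imp fun s hs => ⟨hs, ht.symm⟩)⟩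
  rcases h with ⟨_, _, rfl⟩ | ⟨_, _, _, _, rfl⟩ <;> rfl

theorem snd_eq_of_acceptsFrom_eq {p q : Fin m × Finset (Fin n)}
    (h : (dfaAB m n).acceptsFrom p = (dfaAB m n).acceptsFrom q) : p.2 = q.2 :=
  Finset.ext fun s => by
    rw [← replicate_b_mem_acceptsFrom_iff p.1 p.2 s, ← replicate_b_mem_acceptsFrom_iff q.1 q.2 s,
      h]

theorem eq_of_acceptsFrom_eq (hn : 1 < n) {i j : Fin m} {S T : Finset (Fin n)}
    (hS : S.Nonempty) (h : (dfaAB m n).acceptsFrom (i, S) = (dfaAB m n).acceptsFrom (j, T)) :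
    (i, S) = (j, T) := by
  obtain rfl : S = T := snd_eq_of_acceptsFrom_eq h
  refine Prod.ext ?_ rfl
  by_contra hij
  -- `c^(n-1)` collapses `S` to `{0}`, `a^(m-i)` moves `i` but not `j` to `0`, and then `b`
  -- inserts `0` on the side of `i` only.
  let z : List (Fin 3) := replicate (n - 1) 2 ++ replicate (m - i.val) 0 ++ [1]
  have hz : ((dfaAB m n).evalFrom (i, S) z).2 = ((dfaAB m n).evalFrom (j, S) z).2 :=
    snd_eq_of_acceptsFrom_eq (by rw [acceptsFrom_evalFrom, acceptsFrom_evalFrom, h])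
  have hi : i + ((m - i.val : ℕ) : Fin m) = 0 := by
    rw [Fin.add_natCast_eq_zero_iff, Nat.add_sub_cancel' i.isLt.le]
  have hj : j + ((m - i.val : ℕ) : Fin m) ≠ 0 := fun hj =>
    hij (add_right_cancel (hi.trans hj.symm))
  simp only [z, evalFrom_of_append, evalFrom_replicate_c_of_nonempty _ hS,
    evalFrom_replicate_a_singleton_zero, hi, evalFrom_singleton] at hz
  have h0 : (0 : Fin n) ∈ ((dfaAB m n).step (0, {0}) 1).2 :=
    (mem_snd_step_concat _ _ _ _ _).mpr (Or.inr ⟨rfl, rfl⟩)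
  refine (mem_snd_step_concat _ _ _ _ _).not.mpr ?_ (hz ▸ h0)
  rintro (⟨s, hs, h1⟩ | ⟨hj', -⟩)
  · rw [Finset.mem_singleton.mp hs] at h1
    exact Fin.one_eq_zero_iff.not.mpr hn.ne' ((zero_add _).symm.trans h1)
  · exact hj hj'

theorem isReachable_one (hm : 1 < m) {S : Finset (Fin n)} (hS : S.Nonempty) :
    (dfaAB m n).IsReachable (1, S) := by
  have rotate {S : Finset (Fin n)} (c : Fin n) (h : (dfaAB m n).IsReachable (1, S)) :
      (dfaAB m n).IsReachable (1, S.image (· + c)) := by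
    simpa only [evalFrom_replicate_b_of_ne_zero 1 (Fin.one_eq_zero_iff.not.mpr hm.ne'),
      Fin.cast_val_eq_self] using h.evalFrom (replicate c.val 1)
  have insert_zero {S : Finset (Fin n)} (h : (dfaAB m n).IsReachable (1, S)) :
      (dfaAB m n).IsReachable (1, insert 0 S) := by
    simpa only [evalFrom_replicate_a_of_eq (1 : Fin m) S (m - 1)
        (by rw [Fin.val_one_of_one_lt hm]; omega),
      evalFrom_replicate_a_of_lt (0 : Fin m) (insert 0 S) 1 (by rw [Fin.val_zero]; omega),
      zero_add, Nat.cast_one] using (h.evalFrom (replicate (m - 1) 0)).evalFrom (replicate 1 0)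
  induction hS using Finset.Nonempty.cons_induction with
  | singleton a =>
    have h0 : (dfaAB m n).IsReachable (1, {0}) :=
      ⟨replicate 1 0, (evalFrom_replicate_a_of_lt (0 : Fin m) {0} 1
        (by rw [Fin.val_zero]; omega)).trans (by rw [zero_add, Nat.cast_one])⟩
    simpa using rotate a h0
  | cons a s _ _ ih =>
    convert rotate a (insert_zero (rotate (-a) ih)) using 2
    ext t
    simp

theorem mem_reachableStates {p : Fin m × Finset (Fin n)} :
    p ∈ reachableStates m n ↔ p.2.Nonempty ∧ (p.1 = 0 → 0 ∈ p.2) := by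
  obtain ⟨i, S⟩ := p
  simp only [reachableStates, Finset.mem_union, Finset.mem_product, Finset.mem_singleton,
    Finset.mem_filter, Finset.mem_univ, Finset.mem_erase, true_and, and_true,
    Finset.nonempty_iff_ne_empty]
  by_cases h : i = 0
  · simpa [h] using Finset.ne_empty_of_mem
  · simp [h]

theorem isReachable_of_mem_reachableStates (hm : 1 < m) {p : Fin m × Finset (Fin n)}
    (hp : p ∈ reachableStates m n) : (dfaAB m n).IsReachable p := by
  obtain ⟨i, S⟩ := p
  obtain ⟨hS, h0⟩ := mem_reachableStates.mp hp
  have hval := Fin.val_one_of_one_lt hm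
  by_cases hi : i = 0
  · have := (isReachable_one hm hS).evalFrom (replicate (m - 1) 0)
    rwa [evalFrom_replicate_a_of_eq 1 S (m - 1) (by rw [hval]; omega),
      Finset.insert_eq_self.mpr (h0 hi), ← hi] at this
  · have hi1 : 1 ≤ i.val := Nat.one_le_iff_ne_zero.mpr (Fin.val_ne_iff.mpr hi)
    have := (isReachable_one hm hS).evalFrom (replicate (i.val - 1) 0)
    rwa [evalFrom_replicate_a_of_lt 1 S _ (by rw [hval]; omega), ← Nat.cast_one, ← Nat.cast_add,
      Nat.add_sub_cancel' hi1, Fin.cast_val_eq_self] at this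

theorem card_reachableStates (hm : 1 < m) (hn : 1 < n) :
    #(reachableStates m n) = m * (2 ^ n - 1) - 2 ^ (n - 1) + 1 := by
  have hdisj : Disjoint ({0} ×ˢ Finset.univ.filter (0 ∈ ·))
      ((Finset.univ.erase (0 : Fin m)) ×ˢ (Finset.univ.erase (∅ : Finset (Fin n)))) :=
    Finset.disjoint_left.mpr fun p hp hp' => by
      simp only [Finset.mem_product, Finset.mem_singleton, Finset.mem_erase] at hp hp'
      exact hp'.1.1 hp.1
  rw [reachableStates, Finset.card_union_of_disjoint hdisj, Finset.card_product,
    Finset.card_product, Finset.card_singleton, Finset.card_filter_mem_univ_finset,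
    Finset.card_erase_of_mem (Finset.mem_univ _), Finset.card_erase_of_mem (Finset.mem_univ _),
    Finset.card_univ, Finset.card_univ, Fintype.card_finset, Fintype.card_fin, Fintype.card_fin]
  have h2n : 2 ^ n = 2 * 2 ^ (n - 1) := by rw [← pow_succ', Nat.sub_add_cancel (by omega)]
  have hpos : 1 ≤ 2 ^ (n - 1) := Nat.one_le_two_pow
  obtain ⟨k, rfl⟩ : ∃ k, m = k + 1 := ⟨m - 1, by omega⟩
  rw [Nat.add_sub_cancel, add_mul, one_mul, h2n]
  generalize 2 ^ (n - 1) = x at *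
  generalize k * (2 * x - 1) = y
  omega

end StarConcat

open StarConcat DFA in
/-- Lower bound m·(2^n − 1) − 2^(n−1) + 1 is reachable by witnesses over a three-letter
    alphabet, where the m-state DFA A has its unique final state equal to its initial state. -/
theorem starcat_lower_special (m n : ℕ) (hm : 2 ≤ m) (hn : 2 ≤ n) :
    ∃ (A : DFA (Fin 3) (Fin m)) (B : DFA (Fin 3) (Fin n)),
      A.accept = {A.start} ∧
      A.accepts * B.accepts = (A.accepts)∗ * B.accepts ∧
      ∀ (σ : Type) (inst : Fintype σ) (C : DFA (Fin 3) σ),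
        C.accepts = A.accepts * B.accepts →
        m * (2 ^ n - 1) - 2 ^ (n - 1) + 1 ≤ @Fintype.card σ inst := by
  have : NeZero m := ⟨by omega⟩
  have : NeZero n := ⟨by omega⟩
  refine ⟨dfaA m, dfaB n, rfl, by rw [kstar_accepts_of_accept_eq_singleton _ rfl], ?_⟩
  intro σ _ C hC
  rw [← card_reachableStates hm hn]
  refine card_le_card_of_accepts_eq_s9 (dfaAB m n) C (hC.trans (accepts_concat _ _).symm) _
    (fun p hp => isReachable_of_mem_reachableStates hm hp) ?_
  rintro ⟨i, S⟩ hp ⟨j, T⟩ - h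
  exact eq_of_acceptsFrom_eq hn (mem_reachableStates.mp hp).1 h
end

section
/- Let A be a complete DFA with m > 1 states, k1 ≥ 1 final states that are not the initial state, and B a complete DFA with n > 1 states. Then there exists a complete DFA accepting L(A)*·L(B) with at most ((3/4)·2^m − 1)·(2^n − 1) − (2^(m−1) − 2^(m−k1−1))·(2^(n−1) − 1) states. -/
/-!
The subset construction for `L(A)∗ · L(B)` tracks, after reading `w`, the pair `(p, t)` of states
that `A` and `B` reach on the suffixes of `w` following a prefix in `L(A)∗`. In every reachable pair
both `p` and `t` are nonempty, and as soon as `p` meets the final states of `A` the word read so far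
lies in `L(A)∗`, so `p` contains `s₁` and `t` contains `s₂`. Hence `p` is either a nonempty subset
of `Q₁ − F₀` or a set containing `s₁` and meeting `F₀`, and in the second case `t ∋ s₂`: at most
`(2^(m-k₁) - 1)(2^n - 1) + (2^(m-1) - 2^(m-k₁-1)) 2^(n-1)` pairs, which is below the claimed bound.
-/

open Computability

namespace Language

variable {α : Type*} {L : Language α}

theorem append_singleton_mem_kstar_iff {w : List α} {a : α} :
    w ++ [a] ∈ L∗ ↔ ∃ x ∈ L∗, ∃ y, x ++ y = w ∧ y ++ [a] ∈ L := by
  constructor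
  · rw [mem_kstar_iff_exists_nonempty]
    rintro ⟨S, hS, hSL⟩
    obtain ⟨S, z, rfl⟩ := (List.eq_nil_or_concat S).resolve_left (by rintro rfl; simp at hS)
    obtain ⟨y, b, rfl⟩ := (List.eq_nil_or_concat z).resolve_left (hSL _ (by simp)).2
    simp only [List.concat_eq_append, List.flatten_append, List.flatten_singleton,
      ← List.append_assoc] at hS hSL
    obtain ⟨rfl, hab⟩ := List.append_inj' hS rfl
    obtain rfl := List.singleton_inj.1 hab
    exact ⟨S.flatten, join_mem_kstar fun z hz => (hSL z (by simp [hz])).1, y, rfl,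
      (hSL _ (by simp)).1⟩
  · rintro ⟨x, hx, y, rfl, hy⟩
    rw [List.append_assoc]
    exact kstar_mul_le_kstar (α := Language α) (append_mem_mul hx hy)

end Language

namespace DFA

variable {α σ : Type*} {M : DFA α σ} {L : Language α}

def evalSuffixes (M : DFA α σ) (L : Language α) (w : List α) : Set σ :=
  {c | ∃ x ∈ L, ∃ y, x ++ y = w ∧ M.eval y = c}

theorem eval_mem_evalSuffixes (h : [] ∈ L) (w : List α) : M.eval w ∈ M.evalSuffixes L w :=
  ⟨[], h, w, rfl, rfl⟩

theorem start_mem_evalSuffixes {w : List α} (h : w ∈ L) : M.start ∈ M.evalSuffixes L w :=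
  ⟨w, h, [], w.append_nil, rfl⟩

theorem evalSuffixes_nil (h : [] ∈ L) : M.evalSuffixes L [] = {M.start} := by
  ext c
  simp only [evalSuffixes, List.append_eq_nil_iff, Set.mem_ofPred_eq, Set.mem_singleton_iff]
  constructor
  · rintro ⟨x, -, y, ⟨-, rfl⟩, rfl⟩
    rfl
  · rintro rfl
    exact ⟨[], h, [], ⟨rfl, rfl⟩, rfl⟩

theorem mem_evalSuffixes_append_singleton {w : List α} {a : α} {c : σ} :
    c ∈ M.evalSuffixes L (w ++ [a]) ↔
      c ∈ (M.step · a) '' M.evalSuffixes L w ∨ (w ++ [a] ∈ L ∧ c = M.start) := by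
  constructor
  · rintro ⟨x, hx, y, hxy, rfl⟩
    rcases List.eq_nil_or_concat y with rfl | ⟨y, b, rfl⟩
    · rw [List.append_nil] at hxy
      exact Or.inr ⟨hxy ▸ hx, rfl⟩
    · rw [List.concat_eq_append] at hxy ⊢
      rw [← List.append_assoc] at hxy
      obtain ⟨rfl, hab⟩ := List.append_inj' hxy rfl
      obtain rfl := List.singleton_inj.1 hab
      exact Or.inl ⟨M.eval y, ⟨x, hx, y, rfl, rfl⟩, (M.eval_append_singleton y _).symm⟩
  · rintro (⟨_, ⟨x, hx, y, rfl, rfl⟩, rfl⟩ | ⟨hw, rfl⟩)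
    · exact ⟨x, hx, y ++ [a], (List.append_assoc _ _ _).symm, M.eval_append_singleton y a⟩
    · exact start_mem_evalSuffixes hw

theorem evalSuffixes_append_singleton_of_mem {w : List α} {a : α} (h : w ++ [a] ∈ L) :
    M.evalSuffixes L (w ++ [a]) = insert M.start ((M.step · a) '' M.evalSuffixes L w) := by
  ext c
  rw [mem_evalSuffixes_append_singleton, Set.mem_insert_iff]
  tauto

theorem evalSuffixes_append_singleton_of_notMem {w : List α} {a : α} (h : w ++ [a] ∉ L) :
    M.evalSuffixes L (w ++ [a]) = (M.step · a) '' M.evalSuffixes L w := by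
  ext c
  rw [mem_evalSuffixes_append_singleton]
  tauto

theorem exists_mem_evalSuffixes_accept_iff {w : List α} :
    (∃ c ∈ M.evalSuffixes L w, c ∈ M.accept) ↔ w ∈ L * M.accepts := by
  simp only [evalSuffixes, Set.mem_ofPred_eq, Language.mem_mul, mem_accepts]
  constructor
  · rintro ⟨_, ⟨x, hx, y, rfl, rfl⟩, hy⟩
    exact ⟨x, hx, y, hy, rfl⟩
  · rintro ⟨x, hx, y, hy, rfl⟩
    exact ⟨_, ⟨x, hx, y, rfl, rfl⟩, hy⟩

theorem exists_mem_image_step_evalSuffixes_accept_iff {w : List α} {a : α} :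
    (∃ c ∈ (M.step · a) '' M.evalSuffixes L w, c ∈ M.accept) ↔
      ∃ x ∈ L, ∃ y, x ++ y = w ∧ y ++ [a] ∈ M.accepts := by
  simp only [evalSuffixes, Set.mem_image, Set.mem_ofPred_eq, mem_accepts, eval_append_singleton]
  constructor
  · rintro ⟨_, ⟨_, ⟨x, hx, y, rfl, rfl⟩, rfl⟩, hy⟩
    exact ⟨x, hx, y, rfl, hy⟩
  · rintro ⟨x, hx, y, rfl, hy⟩
    exact ⟨_, ⟨_, ⟨x, hx, y, rfl, rfl⟩, rfl⟩, hy⟩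

def restrictReachable (M : DFA α σ) : DFA α {q // ∃ w, M.eval w = q} where
  step q a := ⟨M.step q a, q.2.elim fun w hw => ⟨w ++ [a], hw ▸ M.eval_append_singleton w a⟩⟩
  start := ⟨M.start, [], rfl⟩
  accept := {q | q.1 ∈ M.accept}

theorem coe_eval_restrictReachable (w : List α) : (M.restrictReachable.eval w).1 = M.eval w := by
  induction w using List.reverseRecOn with
  | nil => rfl
  | append_singleton w a ih =>
    rw [eval_append_singleton, eval_append_singleton, ← ih]
    rfl

theorem accepts_restrictReachable : M.restrictReachable.accepts = M.accepts := by
  ext w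
  change (M.restrictReachable.eval w).1 ∈ M.accept ↔ _
  rw [coe_eval_restrictReachable]
  rfl

theorem card_restrictReachable_le [Fintype {q // ∃ w, M.eval w = q}] {S : Finset σ}
    (h : ∀ w, M.eval w ∈ S) : Fintype.card {q // ∃ w, M.eval w = q} ≤ S.card := by
  rw [← Fintype.card_coe S]
  exact Fintype.card_le_of_injective (fun q => ⟨q.1, q.2.elim fun w hw => hw ▸ h w⟩)
    fun q r hqr => Subtype.ext (by simpa using hqr)

end DFA

section StarCat

variable {α σ₁ σ₂ : Type*} (A : DFA α σ₁) (B : DFA α σ₂)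

open scoped Classical in
noncomputable def starCat : DFA α (Finset σ₁ × Finset σ₂) where
  step pt a :=
    let p := pt.1.image (A.step · a)
    let t := pt.2.image (B.step · a)
    if ∃ c ∈ p, c ∈ A.accept then (insert A.start p, insert B.start t) else (p, t)
  start := ({A.start}, {B.start})
  accept := {pt | ∃ c ∈ pt.2, c ∈ B.accept}

theorem coe_starCat_eval (w : List α) :
    (((starCat A B).eval w).1 : Set σ₁) = A.evalSuffixes A.accepts∗ w ∧
      (((starCat A B).eval w).2 : Set σ₂) = B.evalSuffixes A.accepts∗ w := by
  induction w using List.reverseRecOn with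
  | nil =>
    simp only [DFA.eval_nil, DFA.evalSuffixes_nil (Language.nil_mem_kstar _)]
    exact ⟨Finset.coe_singleton _, Finset.coe_singleton _⟩
  | append_singleton w a ih =>
    classical
    have hstar : (∃ c ∈ ((starCat A B).eval w).1.image (A.step · a), c ∈ A.accept) ↔
        w ++ [a] ∈ A.accepts∗ := by
      rw [Language.append_singleton_mem_kstar_iff,
        ← DFA.exists_mem_image_step_evalSuffixes_accept_iff, ← ih.1]
      simp only [← Finset.mem_coe (s := Finset.image _ _), Finset.coe_image]
    rw [DFA.eval_append_singleton]
    generalize (starCat A B).eval w = pt at ih hstar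
    by_cases hw : w ++ [a] ∈ A.accepts∗
    · simp only [starCat]
      rw [if_pos (hstar.2 hw)]
      simp only [Finset.coe_insert, Finset.coe_image, ih.1, ih.2,
        DFA.evalSuffixes_append_singleton_of_mem hw, and_self]
    · simp only [starCat]
      rw [if_neg (mt hstar.1 hw)]
      simp only [Finset.coe_image, ih.1, ih.2, DFA.evalSuffixes_append_singleton_of_notMem hw,
        and_self]

theorem starCat_accepts : (starCat A B).accepts = A.accepts∗ * B.accepts := by
  ext w
  rw [DFA.mem_accepts, ← DFA.exists_mem_evalSuffixes_accept_iff, ← (coe_starCat_eval A B w).2]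
  rfl

theorem starCat_eval_fst_nonempty (w : List α) : ((starCat A B).eval w).1.Nonempty := by
  rw [← Finset.coe_nonempty, (coe_starCat_eval A B w).1]
  exact ⟨_, DFA.eval_mem_evalSuffixes (Language.nil_mem_kstar _) w⟩

theorem starCat_eval_snd_nonempty (w : List α) : ((starCat A B).eval w).2.Nonempty := by
  rw [← Finset.coe_nonempty, (coe_starCat_eval A B w).2]
  exact ⟨_, DFA.eval_mem_evalSuffixes (Language.nil_mem_kstar _) w⟩

theorem starts_mem_starCat_eval {w : List α} (h : ∃ c ∈ ((starCat A B).eval w).1, c ∈ A.accept) :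
    A.start ∈ ((starCat A B).eval w).1 ∧ B.start ∈ ((starCat A B).eval w).2 := by
  obtain ⟨hp, ht⟩ := coe_starCat_eval A B w
  simp only [← Finset.mem_coe, hp, ht] at h ⊢
  have hw : w ∈ A.accepts∗ :=
    kstar_mul_le_kstar (α := Language α) (DFA.exists_mem_evalSuffixes_accept_iff.1 h)
  exact ⟨DFA.start_mem_evalSuffixes hw, DFA.start_mem_evalSuffixes hw⟩

end StarCat

section Counting

open Finset

variable {γ : Type*} [DecidableEq γ]

theorem Finset.card_filter_nonempty_powerset (U : Finset γ) :
    #(U.powerset.filter Finset.Nonempty) = 2 ^ #U - 1 := by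
  rw [← card_powerset, ← card_erase_of_mem (empty_mem_powerset U)]
  congr 1
  ext p
  simp [nonempty_iff_ne_empty, and_comm]

theorem Finset.card_filter_mem_powerset {U : Finset γ} {a : γ} (ha : a ∈ U) :
    #(U.powerset.filter (a ∈ ·)) = 2 ^ (#U - 1) := by
  have himage : U.powerset.filter (a ∈ ·) = (U.erase a).powerset.image (insert a) := by
    ext p
    simp only [mem_filter, mem_powerset, mem_image, subset_erase]
    constructor
    · rintro ⟨hpU, hap⟩
      exact ⟨p.erase a, ⟨(erase_subset a p).trans hpU, notMem_erase a p⟩, insert_erase hap⟩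
    · rintro ⟨q, ⟨hqU, haq⟩, rfl⟩
      exact ⟨insert_subset ha hqU, mem_insert_self a q⟩
  rw [himage, card_image_of_injOn, card_powerset, card_erase_of_mem ha]
  intro p hp q hq hpq
  simp only [coe_powerset, Set.mem_preimage, Set.mem_powerset_iff, coe_subset,
    subset_erase] at hp hq
  rw [← erase_insert hp.2, ← erase_insert hq.2]
  exact congrArg (·.erase a) hpq

variable {σ₁ σ₂ : Type*} [Fintype σ₁] [Fintype σ₂] [DecidableEq σ₁] [DecidableEq σ₂]

/-- The second component of the union consists of the `p ∋ s` meeting `F₀`. -/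
def starCatCandidates (s : σ₁) (F₀ : Finset σ₁) (b : σ₂) : Finset (Finset σ₁ × Finset σ₂) :=
  (F₀ᶜ.powerset.filter Finset.Nonempty ×ˢ univ.powerset.filter Finset.Nonempty) ∪
    ((univ.powerset.filter (s ∈ ·) \ F₀ᶜ.powerset.filter (s ∈ ·)) ×ˢ univ.powerset.filter (b ∈ ·))

theorem mem_starCatCandidates {s : σ₁} {F₀ : Finset σ₁} {b : σ₂} {p : Finset σ₁}
    {t : Finset σ₂} (hp : p.Nonempty) (ht : t.Nonempty) (h : ¬Disjoint p F₀ → s ∈ p ∧ b ∈ t) :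
    (p, t) ∈ starCatCandidates s F₀ b := by
  simp only [starCatCandidates, mem_union, mem_product, mem_sdiff, mem_filter, mem_powerset,
    subset_univ, true_and, subset_compl_iff_disjoint_right]
  by_cases hd : Disjoint p F₀
  · exact Or.inl ⟨⟨hd, hp⟩, ht⟩
  · obtain ⟨hs, hb⟩ := h hd
    exact Or.inr ⟨⟨hs, fun h => hd h.1⟩, hb⟩

theorem card_starCatCandidates_le {s : σ₁} {F₀ : Finset σ₁} (b : σ₂) (hs : s ∉ F₀) :
    #(starCatCandidates s F₀ b) ≤
      (2 ^ (Fintype.card σ₁ - #F₀) - 1) * (2 ^ Fintype.card σ₂ - 1) +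
        (2 ^ (Fintype.card σ₁ - 1) - 2 ^ (Fintype.card σ₁ - #F₀ - 1)) *
          2 ^ (Fintype.card σ₂ - 1) := by
  have hsF₀ : s ∈ F₀ᶜ := mem_compl.2 hs
  refine (card_union_le _ _).trans_eq ?_
  rw [card_product, card_product, card_filter_nonempty_powerset, card_filter_nonempty_powerset,
    card_sdiff_of_subset (filter_subset_filter _ (powerset_mono.2 (subset_univ _))),
    card_filter_mem_powerset hsF₀, card_filter_mem_powerset (mem_univ s),
    card_filter_mem_powerset (mem_univ b), card_compl, card_univ, card_univ]

end Counting

theorem starCat_bound_le {m n k : ℕ} (hk : 1 ≤ k) (hkm : k < m) (hn : 1 ≤ n) :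
    (2 ^ (m - k) - 1) * (2 ^ n - 1) + (2 ^ (m - 1) - 2 ^ (m - k - 1)) * 2 ^ (n - 1) ≤
      (3 * 2 ^ (m - 2) - 1) * (2 ^ n - 1) -
        (2 ^ (m - 1) - 2 ^ (m - k - 1)) * (2 ^ (n - 1) - 1) := by
  obtain ⟨K, hK⟩ : ∃ K, 2 ^ (m - k - 1) = K := ⟨_, rfl⟩
  obtain ⟨H, hH⟩ : ∃ H, 2 ^ (m - 2) = H := ⟨_, rfl⟩
  obtain ⟨N, hN⟩ : ∃ N, 2 ^ (n - 1) = N := ⟨_, rfl⟩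
  have hmk : 2 ^ (m - k) = 2 * K := by rw [← hK, ← pow_succ']; congr 1; omega
  have hm1 : 2 ^ (m - 1) = 2 * H := by rw [← hH, ← pow_succ']; congr 1; omega
  have hn1 : 2 ^ n = 2 * N := by rw [← hN, ← pow_succ']; congr 1; omega
  have hKH : K ≤ H := hK ▸ hH ▸ Nat.pow_le_pow_right two_pos (by omega)
  have hK1 : 1 ≤ K := hK ▸ Nat.one_le_two_pow
  have hN1 : 1 ≤ N := hN ▸ Nat.one_le_two_pow
  rw [hmk, hm1, hn1, hK, hH, hN]
  -- the slack is `(H - K) * (2 * N - 1)`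
  apply Nat.le_sub_of_add_le
  zify [hK1, hN1, hKH, (by omega : K ≤ 2 * H), (by omega : 1 ≤ 3 * H), (by omega : 1 ≤ 2 * K),
    (by omega : 1 ≤ 2 * N)]
  nlinarith [mul_nonneg (sub_nonneg.2 (Int.ofNat_le.2 hKH)) (by omega : (0 : ℤ) ≤ 2 * N - 1)]

theorem starcat_upper_general
    (m n k₁ : ℕ) (hk : 1 ≤ k₁)
    (α σ₁ σ₂ : Type) [Fintype σ₁] [Fintype σ₂]
    (A : DFA α σ₁) (B : DFA α σ₂)
    (hcm : Fintype.card σ₁ = m) (hcn : Fintype.card σ₂ = n)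
    (hk₁ : (A.accept \ {A.start}).ncard = k₁) :
    ∃ (σ : Type) (inst : Fintype σ) (C : DFA α σ),
      C.accepts = (A.accepts)∗ * B.accepts ∧
      @Fintype.card σ inst ≤
        (3 * 2 ^ (m - 2) - 1) * (2 ^ n - 1) -
          (2 ^ (m - 1) - 2 ^ (m - k₁ - 1)) * (2 ^ (n - 1) - 1) := by
  classical
  subst hcm hcn hk₁
  set F₀ := (A.accept \ {A.start}).toFinset
  have hF₀ : (A.accept \ {A.start}).ncard = F₀.card := Set.ncard_eq_toFinset_card' _
  have hs : A.start ∉ F₀ := by simp [F₀]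
  refine ⟨_, inferInstance, (starCat A B).restrictReachable,
    by rw [DFA.accepts_restrictReachable, starCat_accepts], ?_⟩
  refine (DFA.card_restrictReachable_le (S := starCatCandidates A.start F₀ B.start)
    fun w => ?_).trans ?_
  · refine mem_starCatCandidates (starCat_eval_fst_nonempty A B w)
      (starCat_eval_snd_nonempty A B w) fun hd => starts_mem_starCat_eval A B ?_
    obtain ⟨c, hcp, hcF⟩ := Finset.not_disjoint_iff.1 hd
    exact ⟨c, hcp, (Set.mem_toFinset.1 hcF).1⟩
  · rw [hF₀] at hk ⊢
    exact (card_starCatCandidates_le _ hs).trans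
      (starCat_bound_le hk (Finset.card_lt_univ_of_notMem hs) (Fintype.card_pos_iff.2 ⟨B.start⟩))

/-- General upper bound for star combined with catenation, where the m-state DFA A has
    k₁ ≥ 1 final states that are not its initial state, and B has n > 1 states. -/
theorem starcat_upper
    (m n k₁ : ℕ) (hm : 1 < m) (hn : 1 < n) (hk : 1 ≤ k₁)
    (α σ₁ σ₂ : Type) [Fintype σ₁] [Fintype σ₂]
    (A : DFA α σ₁) (B : DFA α σ₂)
    (hcm : Fintype.card σ₁ = m) (hcn : Fintype.card σ₂ = n)
    (hk₁ : (A.accept \ {A.start}).ncard = k₁) :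
    ∃ (σ : Type) (inst : Fintype σ) (C : DFA α σ),
      C.accepts = (A.accepts)∗ * B.accepts ∧
      @Fintype.card σ inst ≤
        (3 * 2 ^ (m - 2) - 1) * (2 ^ n - 1) -
          (2 ^ (m - 1) - 2 ^ (m - k₁ - 1)) * (2 ^ (n - 1) - 1) :=
  starcat_upper_general m n k₁ hk α σ₁ σ₂ A B hcm hcn hk₁
end

section
/- Let M be the DFA over Σ = {a,b,c,d} with states {0,…,m−1} (m ≥ 2), initial state 0, final state m−1, where a is the cyclic shift i ↦ i+1 mod m, b fixes 0,…,m−2 and sends m−1 to m−2, c swaps m−2 and m−1 fixing others, and d is the identity. Then the subset-construction DFA A for L(M)^R, with initial state {m−1}, is minimal: all 2^m subsets of {0,…,m−1} are reachable from {m−1}, and any two distinct subsets are distinguishable. -/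
/-!
The letters act on subsets by preimage. The letter `a` acts through the rotation of `Fin (m + 2)`,
`c` through the transposition of `m` and `m + 1`; these generate the symmetric group, so the
reachable subsets are closed under every permutation. The letter `b` adds `m + 1` to any set
containing `m`; conjugating by a permutation that moves a chosen element of a nonempty set to `m`
and a missing element to `m + 1`, any missing element can be added. Starting from `{m + 1}` and
`∅ = b {m + 1}` this reaches every subset.

Every state `x` of `M` is reached by `u = a^x`, and `S` accepts `u` reversed iff `x ∈ S`; so an
element in the symmetric difference of `S` and `T` gives a word distinguishing them.
-/

open Computability

/-- The witness DFA `M` over Σ = {a,b,c,d} with m+2 states {0,…,m+1} (so m+2 ≥ 2),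
    initial state 0, final state m+1, where a is the cyclic shift i ↦ i+1 mod (m+2),
    b fixes 0,…,m and sends m+1 to m, c swaps m and m+1 fixing the others, and d is the
    identity. (Here the paper's "m" is `m + 2`, "m−1" is `m+1` and "m−2" is `m`.) -/
def witnessM (m : ℕ) : DFA (Fin 4) (Fin (m + 2)) where
  step i l :=
    if l = 0 then ⟨(i.val + 1) % (m + 2), Nat.mod_lt _ (by omega)⟩
    else if l = 1 then (if i.val = m + 1 then ⟨m, by omega⟩ else i)
    else if l = 2 then
      (if i.val = m then ⟨m + 1, by omega⟩
       else if i.val = m + 1 then ⟨m, by omega⟩ else i)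
    else i
  start := ⟨0, by omega⟩
  accept := {⟨m + 1, by omega⟩}

/-- The subset-construction DFA `A` for L(M)^R: states are subsets, initial state {m+1},
    transitions δ_A(S, e) = {j : δ_M(j, e) ∈ S}, final states the subsets containing 0. -/
def witnessA (m : ℕ) : DFA (Fin 4) (Finset (Fin (m + 2))) where
  step S l := Finset.univ.filter (fun j => (witnessM m).step j l ∈ S)
  start := {⟨m + 1, by omega⟩}
  accept := {S | (⟨0, by omega⟩ : Fin (m + 2)) ∈ S}

open Equiv

namespace DFA

theorem exists_eval_eq_of_step_eq_finRotate {α : Type*} {n : ℕ} (M : DFA α (Fin (n + 1)))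
    (h0 : M.start = 0) {a : α} (ha : ∀ j, M.step j a = finRotate (n + 1) j) (x : Fin (n + 1)) :
    ∃ u, M.eval u = x := by
  suffices h : ∀ k ≤ n, (M.eval (List.replicate k a) : ℕ) = k from
    ⟨List.replicate x a, Fin.ext (h x (Nat.lt_succ_iff.mp x.isLt))⟩
  intro k hk
  induction k with
  | zero => simp [h0]
  | succ k ih =>
    have hlast : M.eval (List.replicate k a) ≠ Fin.last n := by
      rw [Ne, Fin.ext_iff, ih (by omega)]
      simp only [Fin.val_last]
      omega
    rw [List.replicate_succ', eval_append_singleton, ha, coe_finRotate_of_ne_last hlast,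
      ih (by omega)]

variable {α : Type} {σ : Type*} [Fintype σ] [DecidableEq σ]

def reversePowerset (M : DFA α σ) (F : Finset σ) : DFA α (Finset σ) where
  step S a := Finset.univ.filter (fun j => M.step j a ∈ S)
  start := F
  accept := {S | M.start ∈ S}

variable (M : DFA α σ) (F : Finset σ)

@[simp]
theorem mem_reversePowerset_step (S : Finset σ) (a : α) (j : σ) :
    j ∈ (M.reversePowerset F).step S a ↔ M.step j a ∈ S := by
  simp [reversePowerset]

theorem mem_reversePowerset_evalFrom (S : Finset σ) (w : List α) (j : σ) :
    j ∈ (M.reversePowerset F).evalFrom S w ↔ M.evalFrom j w.reverse ∈ S := by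
  induction w generalizing S with
  | nil => rfl
  | cons a w ih => simp [evalFrom_cons, ih, evalFrom_append_singleton]

theorem reversePowerset_accepts (hF : (F : Set σ) = M.accept) :
    (M.reversePowerset F).accepts = revLang M.accepts := by
  ext w
  change M.start ∈ (M.reversePowerset F).evalFrom F w ↔
    M.evalFrom M.start w.reverse ∈ M.accept
  rw [mem_reversePowerset_evalFrom, ← hF, Finset.mem_coe]

theorem exists_reversePowerset_distinguishing_word (hM : ∀ x, ∃ u, M.eval u = x)
    {S T : Finset σ} (hST : S ≠ T) :
    ∃ w, ¬((M.reversePowerset F).evalFrom S w ∈ (M.reversePowerset F).accept ↔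
      (M.reversePowerset F).evalFrom T w ∈ (M.reversePowerset F).accept) := by
  obtain ⟨x, hx⟩ : ∃ x : σ, ¬(x ∈ S ↔ x ∈ T) := by
    by_contra! h
    exact hST (Finset.ext h)
  obtain ⟨u, rfl⟩ := hM x
  refine ⟨u.reverse, ?_⟩
  change ¬(M.start ∈ (M.reversePowerset F).evalFrom S u.reverse ↔
    M.start ∈ (M.reversePowerset F).evalFrom T u.reverse)
  simp only [mem_reversePowerset_evalFrom, List.reverse_reverse]
  exact hx

theorem reversePowerset_step_eq_map {a : α} (e : Perm σ) (he : ∀ j, M.step j a = e j)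
    (S : Finset σ) : (M.reversePowerset F).step S a = S.map e.symm.toEmbedding := by
  ext j
  simp [he, Finset.mem_map_equiv]

end DFA

theorem Equiv.Perm.exists_apply_eq_and_apply_eq {σ : Type*} [DecidableEq σ] {x y p q : σ}
    (hxy : x ≠ y) (hpq : p ≠ q) : ∃ e : Perm σ, e y = p ∧ e x = q := by
  refine ⟨(swap p y).trans (swap q (swap p y x)), ?_, by simp⟩
  have hx : swap p y x ≠ p := by
    rw [Ne, swap_apply_eq_iff, swap_apply_left]
    exact hxy
  simp [swap_apply_of_ne_of_ne hpq hx.symm]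

section PermClosed

variable {σ : Type*} {R : Set (Finset σ)}

theorem map_perm_mem_of_closure_eq_top [Finite σ] {s : Set (Perm σ)}
    (hs : Subgroup.closure s = ⊤) (hR : ∀ e ∈ s, ∀ S ∈ R, S.map e.toEmbedding ∈ R)
    (e : Perm σ) {S : Finset σ} (hS : S ∈ R) : S.map e.toEmbedding ∈ R := by
  have he : e ∈ Submonoid.closure s := by
    rw [← Subgroup.closure_toSubmonoid_of_finite, hs]
    trivial
  induction he using Submonoid.closure_induction generalizing S with
  | mem e he => exact hR e he S hS
  | one => simpa [Perm.one_def] using hS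
  | mul f g _ _ hf hg =>
    have := hf (hg hS)
    rwa [Finset.map_map] at this

theorem forall_mem_of_map_perm_mem_of_insert_mem [DecidableEq σ]
    (hperm : ∀ (e : Perm σ) (S : Finset σ), S ∈ R → S.map e.toEmbedding ∈ R)
    {p q : σ} (hpq : p ≠ q) (hins : ∀ S ∈ R, p ∈ S → insert q S ∈ R)
    (hempty : ∅ ∈ R) (hq : {q} ∈ R) (S : Finset σ) : S ∈ R := by
  induction S using Finset.induction_on with
  | empty => exact hempty
  | insert x S hx ih =>
    rcases S.eq_empty_or_nonempty with rfl | ⟨y, hy⟩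
    · simpa using hperm (swap q x) _ hq
    · obtain ⟨e, hey, hex⟩ :=
        Perm.exists_apply_eq_and_apply_eq (ne_of_mem_of_not_mem hy hx).symm hpq
      have hp : p ∈ S.map e.toEmbedding := Finset.mem_map_equiv.mpr (by simpa [← hey] using hy)
      have := hperm e.symm _ (hins _ (hperm e S ih) hp)
      simpa [Finset.map_map, ← hex] using this

end PermClosed

theorem witnessA_eq_reversePowerset (m : ℕ) :
    witnessA m = (witnessM m).reversePowerset {Fin.last (m + 1)} := rfl

theorem witnessM_step_zero (m : ℕ) (j : Fin (m + 2)) :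
    (witnessM m).step j 0 = finRotate (m + 2) j := by
  rw [finRotate_apply]
  ext
  simp [witnessM, Fin.val_add]

theorem witnessM_step_one (m : ℕ) (j : Fin (m + 2)) :
    (witnessM m).step j 1 = if j = Fin.last (m + 1) then ⟨m, by omega⟩ else j := by
  simp [witnessM, Fin.ext_iff, -Fin.val_eq_zero_iff]

theorem witnessM_step_two (m : ℕ) (j : Fin (m + 2)) :
    (witnessM m).step j 2 = swap ⟨m, by omega⟩ (Fin.last (m + 1)) j := by
  by_cases h1 : j = ⟨m, by omega⟩
  · subst h1; simp [witnessM]; rfl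
  by_cases h2 : j = Fin.last (m + 1)
  · subst h2; simp [witnessM]
  rw [swap_apply_of_ne_of_ne h1 h2]
  simp [witnessM, Fin.ext_iff, -Fin.val_eq_zero_iff] at h1 h2 ⊢
  simp [h1, h2]

theorem witnessA_step_one_singleton_last (m : ℕ) :
    (witnessA m).step {Fin.last (m + 1)} 1 = ∅ := by
  ext j
  by_cases hj : j = Fin.last (m + 1) <;>
    simp [witnessA_eq_reversePowerset, witnessM_step_one, hj, Fin.ext_iff]

theorem witnessA_step_one_of_mem {m : ℕ} {S : Finset (Fin (m + 2))}
    (hm : ⟨m, by omega⟩ ∈ S) :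
    (witnessA m).step S 1 = insert (Fin.last (m + 1)) S := by
  ext j
  by_cases hj : j = Fin.last (m + 1) <;>
    simp [witnessA_eq_reversePowerset, witnessM_step_one, hj, hm]

theorem closure_finRotate_symm_swap (m : ℕ) :
    Subgroup.closure
      {(finRotate (m + 2)).symm, swap ⟨m, by omega⟩ (Fin.last (m + 1))} = ⊤ := by
  have hlast : (finRotate (m + 2)).symm (Fin.last (m + 1)) = ⟨m, by omega⟩ := by
    rw [symm_apply_eq, finRotate_apply]
    ext
    simp [Fin.val_add]
  have := Perm.closure_cycle_adjacent_swap isCycle_finRotate.inv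
    (by rw [Perm.support_inv, support_finRotate]) (Fin.last (m + 1))
  rwa [Perm.inv_def, hlast, swap_comm] at this

theorem witnessA_eval_surjective (m : ℕ) : Function.Surjective (witnessA m).eval := by
  let R := Set.range (witnessA m).eval
  have hstep : ∀ S ∈ R, ∀ a, (witnessA m).step S a ∈ R := by
    rintro _ ⟨w, rfl⟩ a
    exact ⟨w ++ [a], DFA.eval_append_singleton _ _ _⟩
  have hperm (e : Perm (Fin (m + 2))) (S) (hS : S ∈ R) : S.map e.toEmbedding ∈ R := by
    refine map_perm_mem_of_closure_eq_top (closure_finRotate_symm_swap m) ?_ e hS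
    rintro e (rfl | rfl) S hS
    · simpa [witnessA_eq_reversePowerset,
        DFA.reversePowerset_step_eq_map _ _ _ (witnessM_step_zero m)] using hstep S hS 0
    · simpa [witnessA_eq_reversePowerset,
        DFA.reversePowerset_step_eq_map _ _ _ (witnessM_step_two m)] using hstep S hS 2
  have hins (S) (hS : S ∈ R) (hm : ⟨m, by omega⟩ ∈ S) : insert (Fin.last (m + 1)) S ∈ R :=
    witnessA_step_one_of_mem hm ▸ hstep S hS 1
  have hempty : ∅ ∈ R := witnessA_step_one_singleton_last m ▸ hstep _ ⟨[], rfl⟩ 1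
  exact forall_mem_of_map_perm_mem_of_insert_mem hperm (by simp [Fin.ext_iff]) hins hempty
    ⟨[], rfl⟩

/-- The subset-construction DFA `A` accepts L(M)^R and is minimal: every one of the 2^(m+2)
    subsets is reachable from the initial state {m+1}, and any two distinct subsets are
    distinguishable. -/
theorem witnessA_minimal (m : ℕ) :
    (witnessA m).accepts = revLang (witnessM m).accepts ∧
    (∀ S : Finset (Fin (m + 2)), ∃ w : List (Fin 4), (witnessA m).eval w = S) ∧
    (∀ S T : Finset (Fin (m + 2)), S ≠ T →
      ∃ w : List (Fin 4),
        ¬(((witnessA m).evalFrom S w ∈ (witnessA m).accept) ↔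
          ((witnessA m).evalFrom T w ∈ (witnessA m).accept))) := by
  refine ⟨?_, witnessA_eval_surjective m, fun S T hST => ?_⟩
  · exact (witnessM m).reversePowerset_accepts _ (Finset.coe_singleton _)
  · exact (witnessM m).exists_reversePowerset_distinguishing_word _
      ((witnessM m).exists_eval_eq_of_step_eq_finRotate rfl (witnessM_step_zero m)) hST
end

section
/- Let A = (Q1, Σ, δ1, s1, {s1}) be a complete DFA whose unique final state is its initial state, and B = (Q2, Σ, δ2, s2, F2) a complete DFA. Define the product-subset automaton C with states ⟨q, T⟩ (q ∈ Q1, T ⊆ Q2 nonempty), initial state ⟨s1, {s2}⟩, final states those with T ∩ F2 ≠ ∅, and transition ⟨q,T⟩ on letter a going to ⟨q', δ2(T,a) ∪ {s2}⟩ if q' = δ1(q,a) = s1 and ⟨q', δ2(T,a)⟩ otherwise. Then C accepts exactly L(A)·L(B). -/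
open Computability

/-- The product-subset automaton for the catenation L(A)·L(B), where the unique final state
    of `A` is its initial state. A state is a pair ⟨q, T⟩ with q a state of A and T a set of
    states of B; on a letter `a` we move to ⟨δ₁(q,a), δ₂(T,a)⟩, adding B's start state to
    the second component whenever δ₁(q,a) is A's start (= final) state. -/
def catProdDFA {α σ₁ σ₂ : Type} (A : DFA α σ₁) (B : DFA α σ₂) :
    DFA α (σ₁ × Set σ₂) where
  step p a :=
    ⟨A.step p.1 a,
      (fun t => B.step t a) '' p.2 ∪ {s | A.step p.1 a = A.start ∧ s = B.start}⟩
  start := ⟨A.start, {B.start}⟩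
  accept := {p | (p.2 ∩ B.accept).Nonempty}

/-- Correctness of the product-subset construction: if the unique final state of `A` is its
    initial state, then `catProdDFA A B` accepts exactly L(A)·L(B). -/
theorem catProdDFA_accepts {α σ₁ σ₂ : Type}
    (A : DFA α σ₁) (B : DFA α σ₂) (hF : A.accept = {A.start}) :
    (catProdDFA A B).accepts = A.accepts * B.accepts := by
  have key : ∀ w : List α, (catProdDFA A B).eval w =
      (A.eval w, {s | ∃ u v, u ++ v = w ∧ A.eval u = A.start ∧ s = B.evalFrom B.start v}) := by
    intro w
    induction w using List.reverseRecOn with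
    | nil =>
      simp only [DFA.eval_nil]
      refine Prod.ext rfl ?_
      ext s
      simp only [catProdDFA, Set.mem_singleton_iff, Set.mem_setOf_eq]
      constructor
      · rintro rfl
        exact ⟨[], [], by simp, rfl, rfl⟩
      · rintro ⟨u, v, huv, -, rfl⟩
        obtain ⟨rfl, rfl⟩ := List.append_eq_nil_iff.mp huv
        rfl
    | append_singleton w a ih =>
      simp only [DFA.eval_append_singleton, ih]
      refine Prod.ext rfl ?_
      ext s
      constructor
      · rintro (⟨t, ⟨u, v, rfl, hu, rfl⟩, rfl⟩ | ⟨hA, rfl⟩)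
        · exact ⟨u, v ++ [a], by simp, hu, by simp⟩
        · exact ⟨w ++ [a], [], by simp, by simpa using hA, rfl⟩
      · rintro ⟨u, v, huv, hu, rfl⟩
        rcases v.eq_nil_or_concat with rfl | ⟨v', b, rfl⟩
        · simp only [List.append_nil] at huv
          subst huv
          exact Or.inr ⟨by simpa using hu, rfl⟩
        · rw [List.concat_eq_append, ← List.append_assoc] at huv
          obtain ⟨huv', hb⟩ : u ++ v' = w ∧ b = a := by
            have := List.append_inj' huv rfl
            simpa using this
          subst hb
          exact Or.inl ⟨B.evalFrom B.start v', ⟨u, v', huv', hu, rfl⟩, by simp⟩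
  ext w
  simp only [DFA.mem_accepts, Language.mem_mul, key]
  constructor
  · rintro ⟨s, ⟨⟨u, v, rfl, hu, rfl⟩, hs⟩⟩
    exact ⟨u, by simp [DFA.mem_accepts, hF, hu], v, hs, rfl⟩
  · rintro ⟨u, hu, v, hv, rfl⟩
    have hu' : A.eval u = A.start := by simpa [DFA.mem_accepts, hF] using hu
    exact ⟨B.evalFrom B.start v, ⟨u, v, rfl, hu', rfl⟩, hv⟩
end
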